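/- arXiv:1303.4499 — 6 statements merged into one kernel-verified Lean document; each statement's English description precedes it below -/
import Mathlib

section
/- Let p,n be positive integers, μ,η ≥ 0 with μ+η > 0, and let a be a nonzero complex number with |a| ≤ p/(p+n). Let M ≥ p^η, and suppose μ·|a|/(1+|a|) + η·(p+n)|a|/(p+(p+n)|a|) ≤ M/(M+p^η). Then for all z in the open unit disk, |(1+az^n)^μ · (p + a(p+n)z^n)^η − p^η| < M, where the powers are principal. -/
/-!
Put `w = a z^n`, `c = (p+n)/p` and `t = M / p^η ≥ 1`. Since `p + a(p+n)z^n = p(1 + cw)`, it suffices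
to show `‖(1+w)^μ (1+cw)^η - 1‖ < t`.

The set `log '' ball 1 1` is convex: it is the sublevel set `exp x - 2 cos y < 0` of a convex
function on the strip `|y| ≤ π/2`. A fencing argument gives `‖(1+u)^m - 1‖ ≤ (1+‖u‖)^m - 1` for
`m ≥ 1`, and with `m = (1+ρ)/(2ρ)` the bound `(1+ρ)^m ≤ 2` puts `m log (1+u)` in that set whenever
`‖u‖ < ρ ≤ 1`. Because `ρ/(1+ρ) = 1/(2m)`, the hypothesis on `μ, η` says that
`(μ log(1+w) + η log(1+cw))/Λ` with `Λ = 2t/(1+t)` is a combination of two such points and `0`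
with nonnegative weights of sum at most `1`. Hence it is `log ζ` with `‖ζ - 1‖ < 1`, and
`‖ζ^Λ - 1‖ < 2^Λ - 1 ≤ t`.
-/

open Metric Complex Set
open scoped Real

lemma one_add_mul_log_one_add_div_le {x y : ℝ} (hx : 0 < x) (hxy : x ≤ y) :
    (1 + x) * Real.log (1 + x) / x ≤ (1 + y) * Real.log (1 + y) / y := by
  have h := Real.convexOn_mul_log.secant_mono (a := 1) (x := 1 + x) (y := 1 + y)
    (by simp) (by simp; linarith) (by simp; linarith) (by linarith) (by linarith) (by linarith)
  simpa using h

lemma one_add_rpow_le_two {ρ : ℝ} (hρ : 0 < ρ) (hρ1 : ρ ≤ 1) :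
    (1 + ρ) ^ ((1 + ρ) / (2 * ρ)) ≤ 2 := by
  have h : (1 + ρ) * Real.log (1 + ρ) / ρ ≤ 2 * Real.log 2 := by
    simpa [one_add_one_eq_two] using one_add_mul_log_one_add_div_le hρ hρ1
  calc (1 + ρ) ^ ((1 + ρ) / (2 * ρ)) = Real.exp ((1 + ρ) * Real.log (1 + ρ) / ρ / 2) := by
        rw [Real.rpow_def_of_pos (by linarith)]; field_simp
    _ ≤ Real.exp (Real.log 2) := Real.exp_le_exp.2 (by linarith)
    _ = 2 := Real.exp_log two_pos

lemma two_rpow_le_one_add {t : ℝ} (ht : 1 ≤ t) : (2 : ℝ) ^ (2 * t / (1 + t)) ≤ 1 + t := by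
  have h : 2 * Real.log 2 ≤ (1 + t) * Real.log (1 + t) / t := by
    simpa [one_add_one_eq_two] using one_add_mul_log_one_add_div_le one_pos ht
  calc (2 : ℝ) ^ (2 * t / (1 + t)) = Real.exp (2 * Real.log 2 * t / (1 + t)) := by
        rw [Real.rpow_def_of_pos two_pos]; ring_nf
    _ ≤ Real.exp ((1 + t) * Real.log (1 + t) / t * t / (1 + t)) := by gcongr
    _ = 1 + t := by
        rw [div_mul_cancel₀ _ (by positivity), mul_div_cancel_left₀ _ (by positivity),
          Real.exp_log (by positivity)]

lemma norm_one_add_cpow_sub_one_le {w : ℂ} (hw : ‖w‖ < 1) {m : ℝ} (hm : 1 ≤ m) :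
    ‖(1 + w) ^ (m : ℂ) - 1‖ ≤ (1 + ‖w‖) ^ m - 1 := by
  have hnorm : ∀ s ∈ Icc (0 : ℝ) 1, ‖(s : ℂ) * w‖ = s * ‖w‖ := fun s hs => by
    rw [norm_mul, norm_real, Real.norm_of_nonneg hs.1]
  have hf : ∀ s ∈ Icc (0 : ℝ) 1, HasDerivAt (fun s : ℝ => (1 + (s : ℂ) * w) ^ (m : ℂ) - 1)
      (m * (1 + s * w) ^ ((m : ℂ) - 1) * w) s := fun s hs => by
    have hslit : 1 + (s : ℂ) * w ∈ slitPlane := mem_slitPlane_of_norm_lt_one <| by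
      rw [hnorm s hs]; nlinarith [hs.2, norm_nonneg w]
    have hlin : HasDerivAt (fun z : ℂ => 1 + z * w) w s := by
      simpa using ((hasDerivAt_id (s : ℂ)).mul_const w).const_add 1
    simpa using ((hlin.cpow_const hslit).comp_ofReal).sub_const 1
  have hB : ∀ s : ℝ, HasDerivAt (fun s : ℝ => (1 + s * ‖w‖) ^ m - 1)
      (m * (1 + s * ‖w‖) ^ (m - 1) * ‖w‖) s := fun s => by
    have hlin : HasDerivAt (fun s : ℝ => 1 + s * ‖w‖) ‖w‖ s := by
      simpa using ((hasDerivAt_id s).mul_const ‖w‖).const_add 1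
    simpa [mul_assoc] using ((Real.hasDerivAt_rpow_const (Or.inr hm)).comp s hlin).sub_const 1
  have bound : ∀ s ∈ Ico (0 : ℝ) 1,
      ‖(m : ℂ) * (1 + s * w) ^ ((m : ℂ) - 1) * w‖ ≤ m * (1 + s * ‖w‖) ^ (m - 1) * ‖w‖ := by
    intro s hs
    have hm' : (m : ℂ) - 1 = ((m - 1 : ℝ) : ℂ) := by push_cast; ring
    rw [norm_mul, norm_mul, norm_real, Real.norm_of_nonneg (by linarith), hm', norm_cpow_real]
    gcongr
    exact (norm_add_le _ _).trans (by rw [norm_one, hnorm s (Ico_subset_Icc_self hs)])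
  simpa using image_norm_le_of_norm_deriv_right_le_deriv_boundary
    (fun s hs => (hf s hs).continuousAt.continuousWithinAt)
    (fun s hs => (hf s (Ico_subset_Icc_self hs)).hasDerivWithinAt) (by simp) hB bound
    (right_mem_Icc.2 zero_le_one)

lemma abs_arg_one_add_le {w : ℂ} {ρ : ℝ} (hw : ‖w‖ ≤ ρ) (hρ : ρ ≤ 1) :
    |arg (1 + w)| ≤ π / 2 * ρ := by
  have hρ0 : 0 ≤ ρ := (norm_nonneg w).trans hw
  have hre : 0 ≤ (1 + w).re := by
    simp only [add_re, one_re]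
    linarith [neg_abs_le w.re, abs_re_le_norm w]
  have him : |(1 + w).im| ≤ ρ * ‖1 + w‖ := by
    have hw2 : w.re ^ 2 + w.im ^ 2 ≤ ρ ^ 2 := by
      have := pow_le_pow_left₀ (norm_nonneg w) hw 2
      rw [Complex.sq_norm, normSq_apply] at this
      linarith
    apply abs_le_of_sq_le_sq _ (by positivity)
    rw [mul_pow, Complex.sq_norm, normSq_apply]
    simp only [add_re, add_im, one_re, one_im, zero_add]
    -- with `w.im ^ 2 ≤ ρ ^ 2 - w.re ^ 2` this reduces to `0 ≤ (w.re + ρ ^ 2) ^ 2`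
    nlinarith [sq_nonneg (w.re + ρ ^ 2), mul_le_mul_of_nonneg_left hw2 (by nlinarith : 0 ≤ 1 - ρ ^ 2)]
  have hq : |(1 + w).im / ‖1 + w‖| ≤ ρ := by
    rw [abs_div, abs_norm]
    exact div_le_of_le_mul₀ (norm_nonneg _) hρ0 him
  have hjordan : Real.arcsin ρ ≤ π / 2 * ρ :=
    (Real.arcsin_le_iff_le_sin ⟨by linarith, hρ⟩
      ⟨by nlinarith [Real.pi_pos], by nlinarith [Real.pi_pos]⟩).2 (Real.le_sin_mul hρ0 hρ)
  rw [arg_of_re_nonneg hre, abs_le]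
  obtain ⟨hq₁, hq₂⟩ := abs_le.1 hq
  constructor
  · calc -(π / 2 * ρ) ≤ Real.arcsin (-ρ) := by rw [Real.arcsin_neg]; linarith
      _ ≤ _ := Real.arcsin_le_arcsin hq₁
  · exact (Real.arcsin_le_arcsin hq₂).trans hjordan

lemma norm_exp_sub_one_lt_one_iff (ξ : ℂ) :
    ‖exp ξ - 1‖ < 1 ↔ Real.exp ξ.re < 2 * Real.cos ξ.im := by
  have hsq : ‖exp ξ - 1‖ ^ 2 = Real.exp ξ.re * (Real.exp ξ.re - 2 * Real.cos ξ.im) + 1 := by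
    rw [Complex.sq_norm, normSq_apply, sub_re, sub_im, exp_re, exp_im, one_re, one_im]
    linear_combination Real.exp ξ.re ^ 2 * Real.sin_sq_add_cos_sq ξ.im
  rw [← sq_lt_one_iff₀ (norm_nonneg _), hsq, add_lt_iff_neg_right, mul_neg_iff]
  have := Real.exp_pos ξ.re
  constructor
  · rintro (⟨-, h⟩ | ⟨h, -⟩) <;> linarith
  · intro h; left; exact ⟨this, by linarith⟩

lemma log_image_ball_one : log '' ball (1 : ℂ) 1 =
    {ξ ∈ im ⁻¹' Icc (-(π / 2)) (π / 2) | Real.exp ξ.re - 2 * Real.cos ξ.im < 0} := by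
  ext ξ
  simp only [mem_image, mem_ball, dist_eq, mem_ofPred_eq, mem_preimage, sub_neg]
  constructor
  · rintro ⟨ζ, hζ, rfl⟩
    have hre : 0 ≤ ζ.re := by
      have := abs_le.1 ((abs_re_le_norm (ζ - 1)).trans hζ.le)
      simp only [sub_re, one_re] at this
      linarith
    have hζ0 : ζ ≠ 0 := by rintro rfl; norm_num at hζ
    refine ⟨?_, ?_⟩
    · rw [log_im, mem_Icc, ← abs_le]
      exact abs_arg_le_pi_div_two_iff.2 hre
    · rwa [← norm_exp_sub_one_lt_one_iff, exp_log hζ0]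
  · rintro ⟨him, hlt⟩
    refine ⟨exp ξ, (norm_exp_sub_one_lt_one_iff ξ).2 hlt, log_exp ?_ ?_⟩ <;>
      linarith [him.1, him.2, Real.pi_pos]

lemma convex_log_image_ball_one : Convex ℝ (log '' ball (1 : ℂ) 1) := by
  have hexp : ConvexOn ℝ univ (fun ξ : ℂ => Real.exp ξ.re) :=
    convexOn_exp.comp_linearMap reLm
  have hcos : ConcaveOn ℝ (im ⁻¹' Icc (-(π / 2)) (π / 2)) (fun ξ : ℂ => 2 * Real.cos ξ.im) :=
    (strictConcaveOn_cos_Icc.concaveOn.comp_linearMap imLm).smul zero_le_two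
  rw [log_image_ball_one]
  exact ((hexp.subset (subset_univ _) hcos.1).sub hcos).convex_lt 0

lemma Convex.smul_add_smul_mem_of_zero_mem {𝕜 E : Type*} [Field 𝕜] [LinearOrder 𝕜]
    [IsStrictOrderedRing 𝕜] [AddCommGroup E] [Module 𝕜 E] {s : Set E} (hs : Convex 𝕜 s)
    (h0 : (0 : E) ∈ s) {x y : E} (hx : x ∈ s) (hy : y ∈ s) {a b : 𝕜} (ha : 0 ≤ a) (hb : 0 ≤ b)
    (hab : a + b ≤ 1) : a • x + b • y ∈ s := by
  rcases (add_nonneg ha hb).eq_or_lt with h | h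
  · obtain ⟨rfl, rfl⟩ : a = 0 ∧ b = 0 := ⟨by linarith, by linarith⟩
    simpa using h0
  have hcomb := hs hx hy (div_nonneg ha h.le) (div_nonneg hb h.le) (by field_simp)
  convert hs.smul_mem_of_zero_mem h0 hcomb ⟨h.le, hab⟩ using 1
  simp only [smul_add, smul_smul]
  field_simp

lemma smul_log_one_add_mem_log_image_ball_one {w : ℂ} {ρ : ℝ} (hw : ‖w‖ < ρ) (hρ : ρ ≤ 1) :
    ((1 + ρ) / (2 * ρ)) • log (1 + w) ∈ log '' ball (1 : ℂ) 1 := by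
  have hρ0 : 0 < ρ := (norm_nonneg w).trans_lt hw
  set m := (1 + ρ) / (2 * ρ) with hm_def
  have hm : 1 ≤ m := by rw [hm_def, le_div_iff₀ (by positivity)]; linarith
  have harg : |(log (1 + w) * m).im| ≤ π / 2 := by
    rw [im_mul_ofReal, log_im, abs_mul, abs_of_pos (show 0 < m by linarith)]
    calc |arg (1 + w)| * m ≤ π / 2 * ρ * m := by gcongr; exact abs_arg_one_add_le hw.le hρ
      _ = π / 2 * ((1 + ρ) / 2) := by rw [hm_def]; field_simp
      _ ≤ π / 2 := by nlinarith [Real.pi_pos]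
  refine ⟨(1 + w) ^ (m : ℂ), ?_, ?_⟩
  · rw [mem_ball, dist_eq]
    calc ‖(1 + w) ^ (m : ℂ) - 1‖ ≤ (1 + ‖w‖) ^ m - 1 :=
          norm_one_add_cpow_sub_one_le (hw.trans_le hρ) hm
      _ < (1 + ρ) ^ m - 1 := by gcongr
      _ ≤ 1 := by linarith [one_add_rpow_le_two hρ0 hρ]
  · rw [cpow_def_of_ne_zero (slitPlane_ne_zero (mem_slitPlane_of_norm_lt_one (hw.trans_le hρ))),
      log_exp, real_smul, mul_comm] <;> linarith [abs_le.1 harg, Real.pi_pos]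

lemma norm_cpow_sub_one_lt {ζ : ℂ} (hζ : ζ ∈ ball (1 : ℂ) 1) {t : ℝ} (ht : 1 ≤ t) :
    ‖ζ ^ ((2 * t / (1 + t) : ℝ) : ℂ) - 1‖ < t := by
  rw [mem_ball, dist_eq] at hζ
  have hΛ : 1 ≤ 2 * t / (1 + t) := by rw [le_div_iff₀ (by linarith)]; linarith
  calc ‖ζ ^ ((2 * t / (1 + t) : ℝ) : ℂ) - 1‖ ≤ (1 + ‖ζ - 1‖) ^ (2 * t / (1 + t)) - 1 := by
        simpa using norm_one_add_cpow_sub_one_le hζ hΛ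
    _ < 2 ^ (2 * t / (1 + t)) - 1 := by gcongr; linarith
    _ ≤ t := by linarith [two_rpow_le_one_add ht]

lemma norm_one_add_cpow_mul_one_add_cpow_sub_one_lt {w₁ w₂ : ℂ} {ρ₁ ρ₂ μ η t : ℝ}
    (hw₁ : ‖w₁‖ < ρ₁) (hρ₁ : ρ₁ ≤ 1) (hw₂ : ‖w₂‖ < ρ₂) (hρ₂ : ρ₂ ≤ 1) (hμ : 0 ≤ μ) (hη : 0 ≤ η)
    (ht : 1 ≤ t) (h : μ * (ρ₁ / (1 + ρ₁)) + η * (ρ₂ / (1 + ρ₂)) ≤ t / (1 + t)) :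
    ‖(1 + w₁) ^ (μ : ℂ) * (1 + w₂) ^ (η : ℂ) - 1‖ < t := by
  have hρ₁0 : 0 < ρ₁ := (norm_nonneg w₁).trans_lt hw₁
  have hρ₂0 : 0 < ρ₂ := (norm_nonneg w₂).trans_lt hw₂
  set Λ := 2 * t / (1 + t) with hΛ
  set m₁ := (1 + ρ₁) / (2 * ρ₁) with hm₁
  set m₂ := (1 + ρ₂) / (2 * ρ₂) with hm₂
  have hsum : μ / (m₁ * Λ) + η / (m₂ * Λ) ≤ 1 := by
    have e : μ / (m₁ * Λ) + η / (m₂ * Λ)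
        = (μ * (ρ₁ / (1 + ρ₁)) + η * (ρ₂ / (1 + ρ₂))) / (t / (1 + t)) := by
      rw [hm₁, hm₂, hΛ]; field_simp
    rw [e, div_le_one (by positivity)]
    exact h
  obtain ⟨ζ, hζ, hlog⟩ : (μ / (m₁ * Λ)) • (m₁ • log (1 + w₁)) + (η / (m₂ * Λ)) • (m₂ • log (1 + w₂))
      ∈ log '' ball (1 : ℂ) 1 := convex_log_image_ball_one.smul_add_smul_mem_of_zero_mem
    ⟨1, mem_ball_self one_pos, log_one⟩ (smul_log_one_add_mem_log_image_ball_one hw₁ hρ₁)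
    (smul_log_one_add_mem_log_image_ball_one hw₂ hρ₂) (by positivity) (by positivity) hsum
  have hpow : (1 + w₁) ^ (μ : ℂ) * (1 + w₂) ^ (η : ℂ) = ζ ^ (Λ : ℂ) := by
    rw [cpow_def_of_ne_zero (slitPlane_ne_zero (mem_slitPlane_of_norm_lt_one (hw₁.trans_le hρ₁))),
      cpow_def_of_ne_zero (slitPlane_ne_zero (mem_slitPlane_of_norm_lt_one (hw₂.trans_le hρ₂))),
      cpow_def_of_ne_zero (slitPlane_ne_zero (ball_one_subset_slitPlane hζ)), hlog, ← exp_add]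
    have hcancel : ∀ ν m : ℝ, 0 < m → ν / (m * Λ) * m * Λ = ν := fun ν m hm => by
      have : 0 < Λ := by positivity
      field_simp
    congr 1
    calc log (1 + w₁) * μ + log (1 + w₂) * η
        = ((μ / (m₁ * Λ) * m₁ * Λ : ℝ) : ℂ) * log (1 + w₁)
          + ((η / (m₂ * Λ) * m₂ * Λ : ℝ) : ℂ) * log (1 + w₂) := by
          rw [hcancel μ m₁ (by positivity), hcancel η m₂ (by positivity)]; ring
      _ = _ := by simp only [real_smul]; push_cast; ring
  rw [hpow]
  exact norm_cpow_sub_one_lt hζ ht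

lemma ofReal_mul_cpow {r : ℝ} (hr : 0 < r) {x : ℂ} (hx : x ≠ 0) (y : ℂ) :
    ((r : ℂ) * x) ^ y = (r : ℂ) ^ y * x ^ y := by
  have hr' : (r : ℂ) ≠ 0 := ofReal_ne_zero.2 hr.ne'
  rw [cpow_def_of_ne_zero (mul_ne_zero hr' hx), log_ofReal_mul hr hx, cpow_def_of_ne_zero hr',
    cpow_def_of_ne_zero hx, ofReal_log hr.le, add_mul, exp_add]

lemma norm_one_add_cpow_mul_ofReal_mul_one_add_cpow_sub_lt {w : ℂ} {q r c μ η M : ℝ}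
    (hq : 0 < q) (hw : ‖w‖ < r) (hc : 1 ≤ c) (hcr : c * r ≤ 1) (hμ : 0 ≤ μ) (hη : 0 ≤ η)
    (hM : q ^ η ≤ M) (h : μ * (r / (1 + r)) + η * (c * r / (1 + c * r)) ≤ M / (M + q ^ η)) :
    ‖(1 + w) ^ (μ : ℂ) * ((q : ℂ) * (1 + c * w)) ^ (η : ℂ) - ((q ^ η : ℝ) : ℂ)‖ < M := by
  have hQ : 0 < q ^ η := Real.rpow_pos_of_pos hq η
  have hcw : ‖(c : ℂ) * w‖ < c * r := by
    rw [norm_mul, norm_real, Real.norm_of_nonneg (by linarith)]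
    exact mul_lt_mul_of_pos_left hw (by linarith)
  have hr : r ≤ c * r := le_mul_of_one_le_left ((norm_nonneg w).trans hw.le) hc
  have hbound := norm_one_add_cpow_mul_one_add_cpow_sub_one_lt hw (hr.trans hcr) hcw hcr hμ hη
    ((one_le_div hQ).2 hM) (h.trans_eq (by field_simp; ring))
  rw [ofReal_mul_cpow hq (slitPlane_ne_zero (mem_slitPlane_of_norm_lt_one (hcw.trans_le hcr))),
    ← ofReal_cpow hq.le]
  calc _ = ‖((q ^ η : ℝ) : ℂ) * ((1 + w) ^ (μ : ℂ) * (1 + c * w) ^ (η : ℂ) - 1)‖ := by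
        congr 1; ring
    _ = q ^ η * ‖(1 + w) ^ (μ : ℂ) * (1 + c * w) ^ (η : ℂ) - 1‖ := by
        rw [norm_mul, norm_real, Real.norm_of_nonneg hQ.le]
    _ < q ^ η * (M / q ^ η) := by gcongr
    _ = M := by field_simp

theorem stmt_4_general (p n : ℕ) (hp : 0 < p) (hn : 0 < n) (μ η : ℝ)
    (hμ : 0 ≤ μ) (hη : 0 ≤ η)
    (a : ℂ) (ha : a ≠ 0) (habs : ‖a‖ ≤ (p:ℝ) / ((p:ℝ) + (n:ℝ)))
    (M : ℝ) (hM : (p:ℝ) ^ η ≤ M)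
    (hineq : μ * (‖a‖ / (1 + ‖a‖))
        + η * (((p:ℝ) + (n:ℝ)) * ‖a‖
            / ((p:ℝ) + ((p:ℝ) + (n:ℝ)) * ‖a‖))
        ≤ M / (M + (p:ℝ) ^ η)) :
    ∀ z ∈ ball (0:ℂ) 1,
      ‖(1 + a * z ^ n) ^ (μ:ℂ)
        * ((p:ℂ) + a * ((p:ℂ) + (n:ℂ)) * z ^ n) ^ (η:ℂ)
        - (((p:ℝ) ^ η : ℝ) : ℂ)‖ < M := by
  intro z hz
  have hp0 : (0 : ℝ) < p := Nat.cast_pos.2 hp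
  set c : ℝ := (p + n) / p with hc
  have hw : ‖a * z ^ n‖ < ‖a‖ := by
    rw [norm_mul, norm_pow]
    exact mul_lt_of_lt_one_right (norm_pos_iff.2 ha)
      (pow_lt_one₀ (norm_nonneg z) (mem_ball_zero_iff.1 hz) hn.ne')
  have hfactor : (p : ℂ) + a * ((p : ℂ) + (n : ℂ)) * z ^ n
      = ((p : ℝ) : ℂ) * (1 + (c : ℂ) * (a * z ^ n)) := by
    have : (p : ℂ) ≠ 0 := Nat.cast_ne_zero.2 hp.ne'
    rw [hc]; push_cast; field_simp
  have hca : c * ‖a‖ / (1 + c * ‖a‖) = ((p : ℝ) + n) * ‖a‖ / (p + ((p : ℝ) + n) * ‖a‖) := by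
    rw [hc]; field_simp
  rw [hfactor]
  refine norm_one_add_cpow_mul_ofReal_mul_one_add_cpow_sub_lt hp0 hw ?_ ?_ hμ hη hM (hca ▸ hineq)
  · rw [hc, le_div_iff₀ hp0]; linarith
  · rw [hc, div_mul_eq_mul_div, div_le_one hp0, mul_comm]
    exact (le_div_iff₀ (by positivity)).1 habs

theorem stmt_4 (p n : ℕ) (hp : 0 < p) (hn : 0 < n) (μ η : ℝ)
    (hμ : 0 ≤ μ) (hη : 0 ≤ η) (hμη : 0 < μ + η)
    (a : ℂ) (ha : a ≠ 0) (habs : ‖a‖ ≤ (p:ℝ) / ((p:ℝ) + (n:ℝ)))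
    (M : ℝ) (hM : (p:ℝ) ^ η ≤ M)
    (hineq : μ * (‖a‖ / (1 + ‖a‖))
        + η * (((p:ℝ) + (n:ℝ)) * ‖a‖
            / ((p:ℝ) + ((p:ℝ) + (n:ℝ)) * ‖a‖))
        ≤ M / (M + (p:ℝ) ^ η)) :
    ∀ z ∈ ball (0:ℂ) 1,
      ‖(1 + a * z ^ n) ^ (μ:ℂ)
        * ((p:ℂ) + a * ((p:ℂ) + (n:ℂ)) * z ^ n) ^ (η:ℂ)
        - (((p:ℝ) ^ η : ℝ) : ℂ)‖ < M :=
  stmt_4_general p n hp hn μ η hμ hη a ha habs M hM hineq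
end

section
/- Let p be a positive integer, γ ≥ 0, and let a be a nonzero complex number with |a| ≤ p. Let M ≥ p^γ and suppose |a| + γ·|a|/(p+|a|) ≤ M/(M+p^γ). Then for all z in the open unit disk, |e^{az}·(p+az)^γ − p^γ| < M, where (p+az)^γ denotes the principal power. -/
open Metric Complex

/-!
Factor `exp (a z) (p + a z)^γ = p^γ exp v` with `v = a z + γ log (1 + a z / p)`. Since
`‖exp v - 1‖ ≤ exp ‖v‖ - 1` and `‖log (1 + w)‖ ≤ ‖w‖ / (1 - ‖w‖)`, it suffices that
`A + γ A / (p - A) ≤ log (1 + M / p^γ) = -log (1 - c)` for `A = |a|`, `c = M / (M + p^γ)`.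
The hypothesis gives `γ A ≤ (c - A)(p + A)`, which reduces this to the case `p = 1`; there,
with `t = √(1 - c)`, AM-GM bounds the left side by `(1 - t)(3 - t)`, and `-log (t²)` dominates
that by the first two terms of the series of `-log (1 - (1 - t))`.
-/

namespace Real

lemma add_sq_div_two_le_neg_log_one_sub {u : ℝ} (h0 : 0 ≤ u) (h1 : u < 1) :
    u + u ^ 2 / 2 ≤ -log (1 - u) := by
  have hlog : HasSum (fun n : ℕ ↦ u ^ (n + 1) / (n + 1)) (-log (1 - u)) :=
    hasSum_pow_div_log_of_abs_lt_one (by rwa [abs_of_nonneg h0])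
  have := sum_le_hasSum (Finset.range 2) (fun _ _ ↦ by positivity) hlog
  norm_num [Finset.sum_range_succ] at this
  linarith

lemma add_mul_div_one_sub_le_neg_log_one_sub {A c : ℝ} (hc0 : 0 ≤ c) (hA : A ≤ c) (hc : c < 1) :
    A + (c - A) * (1 + A) / (1 - A) ≤ -log (1 - c) := by
  obtain ⟨t, ht0, ht1, rfl⟩ : ∃ t, 0 < t ∧ t ≤ 1 ∧ c = 1 - t ^ 2 :=
    ⟨√(1 - c), by positivity, sqrt_le_one.mpr (by linarith),
      by rw [sq_sqrt (by linarith)]; ring⟩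
  have hA1 : 0 < 1 - A := by linarith
  have amgm : 2 * t ≤ (1 - A) + t ^ 2 / (1 - A) := by
    have : (1 - A) + t ^ 2 / (1 - A) - 2 * t = (1 - A - t) ^ 2 / (1 - A) := by
      field_simp; ring
    linarith [div_nonneg (sq_nonneg (1 - A - t)) hA1.le]
  have hlog : 2 * ((1 - t) + (1 - t) ^ 2 / 2) ≤ -log (1 - (1 - t ^ 2)) := by
    have := add_sq_div_two_le_neg_log_one_sub (u := 1 - t) (by linarith) (by linarith)
    rw [sub_sub_cancel, log_pow] at *
    push_cast
    linarith
  have : A + (1 - t ^ 2 - A) * (1 + A) / (1 - A) = 3 + t ^ 2 - 2 * ((1 - A) + t ^ 2 / (1 - A)) := by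
    field_simp; ring
  nlinarith

lemma add_mul_div_sub_le_neg_log_one_sub {p A γ c : ℝ} (hp : 1 ≤ p) (hA : 0 ≤ A) (hγ : 0 ≤ γ)
    (hc : c < 1) (h : A + γ * (A / (p + A)) ≤ c) :
    A + γ * (A / (p - A)) ≤ -log (1 - c) := by
  have hAc : A ≤ c := le_of_add_le_of_nonneg_left h (by positivity)
  have hA1 : A < 1 := hAc.trans_lt hc
  have hγA : γ * A ≤ (c - A) * (p + A) := by
    rw [← div_le_iff₀ (by linarith), mul_div_assoc]; linarith
  have : γ * (A / (p - A)) ≤ (c - A) * (1 + A) / (1 - A) := by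
    rw [← mul_div_assoc, div_le_div_iff₀ (by linarith) (by linarith)]
    nlinarith [mul_le_mul_of_nonneg_right hγA (by linarith : (0:ℝ) ≤ 1 - A),
      mul_nonneg (sub_nonneg.mpr hAc) (mul_nonneg hA (sub_nonneg.mpr hp))]
  linarith [add_mul_div_one_sub_le_neg_log_one_sub (hA.trans hAc) hAc hc]

end Real

namespace Complex

lemma norm_log_one_add_le_div {w : ℂ} (hw : ‖w‖ < 1) : ‖log (1 + w)‖ ≤ ‖w‖ / (1 - ‖w‖) := by
  refine (norm_log_one_add_le hw).trans (le_of_sub_nonneg ?_)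
  have : ‖w‖ / (1 - ‖w‖) - (‖w‖ ^ 2 * (1 - ‖w‖)⁻¹ / 2 + ‖w‖) = ‖w‖ ^ 2 / (2 * (1 - ‖w‖)) := by
    field_simp [(by linarith : 1 - ‖w‖ ≠ 0)]; ring
  rw [this]
  exact div_nonneg (sq_nonneg _) (by linarith)

lemma exp_mul_ofReal_add_cpow {p : ℝ} (hp : 0 < p) (γ : ℂ) {s : ℂ} (hs : (p : ℂ) + s ≠ 0) :
    exp s * (p + s) ^ γ = (p : ℂ) ^ γ * exp (s + γ * log (1 + s / p)) := by
  have hp' : (p : ℂ) ≠ 0 := ofReal_ne_zero.mpr hp.ne'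
  have hfac : (p : ℂ) + s = p * (1 + s / p) := by field_simp
  rw [hfac] at hs ⊢
  rw [cpow_def_of_ne_zero hs, cpow_def_of_ne_zero hp', log_ofReal_mul hp (right_ne_zero_of_mul hs),
    ← exp_add, ← exp_add, ofReal_log hp.le]
  ring_nf

lemma norm_exp_mul_ofReal_add_cpow_sub_le {p : ℝ} (hp : 0 < p) {γ : ℝ} (hγ : 0 ≤ γ) {s : ℂ}
    (hs : ‖s‖ < p) :
    ‖exp s * (p + s) ^ (γ : ℂ) - (p ^ γ : ℝ)‖ ≤
      p ^ γ * (Real.exp (‖s‖ + γ * (‖s‖ / (p - ‖s‖))) - 1) := by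
  have hps : (p : ℂ) + s ≠ 0 := by
    intro h
    rw [eq_neg_of_add_eq_zero_right h, norm_neg, norm_real, Real.norm_of_nonneg hp.le] at hs
    exact lt_irrefl _ hs
  have hw : ‖s / p‖ = ‖s‖ / p := by rw [norm_div, norm_real, Real.norm_of_nonneg hp.le]
  have hw1 : ‖s / p‖ < 1 := by rw [hw, div_lt_one hp]; exact hs
  set v := s + γ * log (1 + s / p)
  have hv : ‖v‖ ≤ ‖s‖ + γ * (‖s‖ / (p - ‖s‖)) := calc
    ‖v‖ ≤ ‖s‖ + γ * ‖log (1 + s / p)‖ := by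
      refine (norm_add_le _ _).trans_eq ?_
      rw [norm_mul, norm_real, Real.norm_of_nonneg hγ]
    _ ≤ ‖s‖ + γ * (‖s / p‖ / (1 - ‖s / p‖)) := by gcongr; exact norm_log_one_add_le_div hw1
    _ = ‖s‖ + γ * (‖s‖ / (p - ‖s‖)) := by
      rw [hw]; field_simp [(by linarith : p - ‖s‖ ≠ 0)]
  rw [exp_mul_ofReal_add_cpow hp _ hps, ← ofReal_cpow hp.le, ← mul_sub_one, norm_mul, norm_real,
    Real.norm_of_nonneg (by positivity)]
  gcongr
  calc ‖exp v - 1‖ ≤ Real.exp ‖v‖ - 1 := by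
        simpa using norm_exp_sub_sum_le_exp_norm_sub_sum v 1
    _ ≤ _ := by gcongr

end Complex

theorem stmt_7_general (p : ℕ) (hp : 0 < p) (γ : ℝ) (hγ : 0 ≤ γ)
    (a : ℂ) (ha : a ≠ 0)
    (M : ℝ) (hM : (p:ℝ) ^ γ ≤ M)
    (hineq : ‖a‖ + γ * (‖a‖ / ((p:ℝ) + ‖a‖))
      ≤ M / (M + (p:ℝ) ^ γ)) :
    ∀ z ∈ ball (0:ℂ) 1,
      ‖Complex.exp (a * z) * ((p:ℂ) + a * z) ^ (γ:ℂ)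
        - (((p:ℝ) ^ γ : ℝ) : ℂ)‖ < M := by
  intro z hz
  have hp1 : (1 : ℝ) ≤ p := by exact_mod_cast hp
  have hP : 0 < (p : ℝ) ^ γ := by positivity
  have hc : M / (M + (p : ℝ) ^ γ) < 1 := by rw [div_lt_one (by linarith)]; linarith
  have hbound := Real.add_mul_div_sub_le_neg_log_one_sub hp1 (norm_nonneg a) hγ hc hineq
  have hAc : ‖a‖ < 1 := le_of_add_le_of_nonneg_left hineq (by positivity) |>.trans_lt hc
  have hs : ‖a * z‖ < ‖a‖ := by
    rw [norm_mul]; exact mul_lt_of_lt_one_right (norm_pos_iff.mpr ha) (mem_ball_zero_iff.mp hz)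
  calc _ ≤ (p : ℝ) ^ γ * (Real.exp (‖a * z‖ + γ * (‖a * z‖ / (p - ‖a * z‖))) - 1) := by
        exact_mod_cast Complex.norm_exp_mul_ofReal_add_cpow_sub_le (by positivity) hγ (by linarith)
    _ < (p : ℝ) ^ γ * (Real.exp (‖a‖ + γ * (‖a‖ / (p - ‖a‖))) - 1) := by
        gcongr (p : ℝ) ^ γ * (Real.exp ?_ - 1)
        exact add_lt_add_of_lt_of_le hs (by gcongr; linarith)
    _ ≤ (p : ℝ) ^ γ * (Real.exp (-Real.log (1 - M / (M + (p : ℝ) ^ γ))) - 1) := by gcongr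
    _ = M := by
      have : 1 - M / (M + (p : ℝ) ^ γ) = (p : ℝ) ^ γ / (M + (p : ℝ) ^ γ) := by
        field_simp [(by linarith : M + (p : ℝ) ^ γ ≠ 0)]; ring
      rw [Real.exp_neg, Real.exp_log (by linarith), this, inv_div]
      field_simp
      ring

theorem stmt_7 (p : ℕ) (hp : 0 < p) (γ : ℝ) (hγ : 0 ≤ γ)
    (a : ℂ) (ha : a ≠ 0) (habs : ‖a‖ ≤ (p:ℝ))
    (M : ℝ) (hM : (p:ℝ) ^ γ ≤ M)
    (hineq : ‖a‖ + γ * (‖a‖ / ((p:ℝ) + ‖a‖))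
      ≤ M / (M + (p:ℝ) ^ γ)) :
    ∀ z ∈ ball (0:ℂ) 1,
      ‖Complex.exp (a * z) * ((p:ℂ) + a * z) ^ (γ:ℂ)
        - (((p:ℝ) ^ γ : ℝ) : ℂ)‖ < M :=
  stmt_7_general p hp γ hγ a ha M hM hineq
end

section
/- Let p,n be positive integers, 0 ≤ λ ≤ 1, and let f ∈ A(p,n) with F_λ(z)F_λ'(z) ≠ 0 on U\{0}, where F_λ(z) = (1−λ)f(z) + λzf'(z). Let M ≥ p. If Re[ −zF_λ'(z)/F_λ(z) + 1 + zF_λ''(z)/F_λ'(z) ] < nM/(M+p) for all z ∈ U, then |zF_λ'(z)/F_λ(z) − p| < M for all z ∈ U. -/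
/-!
With `w := (zF'/F - p)/M` the claim is `|w| < 1`. The power series of `f` gives
`F = z^p (c + z^n S)` on the disc with `S` analytic and `c = 1 - λ + λp ≠ 0`, so `w = z^n E` with
`E` analytic. If `|w| ≥ 1` somewhere, take `z₁` of least modulus with `|w(z₁)| ≥ 1`; then
`|w(z₁)| = 1` is the maximum of `|w|` on `|z| ≤ |z₁|`, and Jack's lemma gives `z₁ w'(z₁) = k w(z₁)`
with real `k ≥ n`: along the radius the Schwarz-type bound `|w(t z₁)| ≤ tⁿ` forces
`Re (z₁ w'/w) ≥ n`, and maximality along the circle forces `Im (z₁ w'/w) = 0`. At `z₁` the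
quantity in the hypothesis is `z (zF'/F)' / (zF'/F) = M k w / (p + M w)`, whose real part is at
least `nM/(M+p)` because `|w| = 1` and `p ≤ M`.
-/

open Metric Complex Filter Set Topology
open scoped InnerProductSpace

theorem exists_analyticOnNhd_eq_pow_mul_of_hasSum {a : ℕ → ℂ} {m : ℕ} {φ : ℂ → ℂ} {R : ℝ}
    (h : ∀ z ∈ ball (0 : ℂ) R, HasSum (fun k => a k * z ^ (m + k)) (φ z)) :
    ∃ g : ℂ → ℂ, AnalyticOnNhd ℂ g (ball 0 R) ∧ ∀ z ∈ ball (0 : ℂ) R, φ z = z ^ m * g z := by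
  set P := FormalMultilinearSeries.ofScalars ℂ a
  have hR : ENNReal.ofReal R ≤ P.radius := by
    refine ENNReal.le_of_forall_nnreal_lt fun r hr => ?_
    rcases eq_or_ne r 0 with rfl | hr0
    · simp
    have hrR : ((r : ℝ) : ℂ) ∈ ball (0 : ℂ) R := by
      simpa using (ENNReal.ofReal_lt_ofReal_iff_of_nonneg r.2).mp (by simpa using hr)
    obtain ⟨C, hC⟩ := (h _ hrR).summable.tendsto_atTop_zero.norm.bddAbove_range
    refine P.le_radius_of_bound (C / (r : ℝ) ^ m) fun k => ?_
    rw [FormalMultilinearSeries.ofScalars_norm, le_div_iff₀ (by positivity)]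
    simpa [pow_add, mul_comm, mul_left_comm, mul_assoc] using hC (mem_range_self k)
  have hball : ball (0 : ℂ) R ⊆ eball 0 P.radius := fun z hz => by
    rw [mem_eball_zero_iff, ← ofReal_norm]
    exact ((ENNReal.ofReal_lt_ofReal_iff_of_nonneg (norm_nonneg z)).mpr
      (mem_ball_zero_iff.mp hz)).trans_le hR
  refine ⟨P.sum, P.analyticOnNhd.mono hball, fun z hz => (h z hz).unique ?_⟩
  have hP := (P.hasSum (hball hz)).mul_left (z ^ m)
  simp only [P, FormalMultilinearSeries.ofScalars_apply_eq, smul_eq_mul] at hP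
  simpa [pow_add, mul_comm, mul_left_comm, mul_assoc] using hP

section LogDeriv

variable {𝕜 : Type*} [NontriviallyNormedField 𝕜]

theorem mul_deriv_pow_mul {g : 𝕜 → 𝕜} {z : 𝕜} (hg : DifferentiableAt 𝕜 g z) (m : ℕ) :
    z * deriv (fun ζ => ζ ^ m * g ζ) z = z ^ m * (m * g z + z * deriv g z) := by
  rw [deriv_fun_mul (differentiableAt_pow m) hg, deriv_pow_field]
  rcases m with _ | m
  · simp
  · simp only [Nat.add_sub_cancel]
    ring

theorem mul_deriv_div_eq_add_pow_mul {F S : 𝕜 → 𝕜} {c z : 𝕜} {p n : ℕ}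
    (hS : DifferentiableAt 𝕜 S z) (hFS : F =ᶠ[𝓝 z] fun ζ => ζ ^ p * (c + ζ ^ n * S ζ))
    (hFz : F z ≠ 0) :
    z * deriv F z / F z = p + z ^ n * ((n * S z + z * deriv S z) / (c + z ^ n * S z)) := by
  have hD : DifferentiableAt 𝕜 (fun ζ => c + ζ ^ n * S ζ) z :=
    ((differentiableAt_pow n).mul hS).const_add c
  have hD' : z * deriv (fun ζ => c + ζ ^ n * S ζ) z = z ^ n * (n * S z + z * deriv S z) := by
    rw [deriv_const_add, mul_deriv_pow_mul hS]
  rw [hFS.eq_of_nhds] at hFz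
  obtain ⟨hzp, hDz⟩ := mul_ne_zero_iff.mp hFz
  rw [hFS.deriv_eq, mul_deriv_pow_mul hD, hD', hFS.eq_of_nhds]
  field_simp

theorem mul_logDeriv_mul_deriv_div {F : 𝕜 → 𝕜} {z : 𝕜} (hz : z ≠ 0) (hF : F z ≠ 0)
    (hF' : deriv F z ≠ 0) (hFd : DifferentiableAt 𝕜 F z)
    (hF'd : DifferentiableAt 𝕜 (deriv F) z) :
    z * logDeriv (fun ζ => ζ * deriv F ζ / F ζ) z
      = -(z * deriv F z / F z) + 1 + z * deriv (deriv F) z / deriv F z := by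
  rw [logDeriv_div (f := fun ζ => ζ * deriv F ζ) z (mul_ne_zero hz hF') hF
      (differentiableAt_id.mul hF'd) hFd,
    logDeriv_mul (f := fun ζ => ζ) z hz hF' differentiableAt_id hF'd, logDeriv_id']
  simp only [logDeriv_apply]
  field_simp
  ring

end LogDeriv

theorem exists_eq_pow_mul_const_add_pow_mul {U : Set ℂ} (hU : IsOpen U) {p n : ℕ} {lam : ℂ}
    {f F g : ℂ → ℂ} (hg : AnalyticOnNhd ℂ g U) (hfg : ∀ z ∈ U, f z = z ^ p * (1 + z ^ n * g z))
    (hF : ∀ z, F z = (1 - lam) * f z + lam * z * deriv f z) :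
    ∃ S : ℂ → ℂ, AnalyticOnNhd ℂ S U ∧
      ∀ z ∈ U, F z = z ^ p * ((1 - lam + lam * p) + z ^ n * S z) := by
  refine ⟨fun z => (1 - lam + lam * p) * g z + lam * (n * g z + z * deriv g z),
    (analyticOnNhd_const.mul hg).add (analyticOnNhd_const.mul
      ((analyticOnNhd_const.mul hg).add (analyticOnNhd_id.mul hg.deriv))), fun z hz => ?_⟩
  have hgz : DifferentiableAt ℂ g z := (hg z hz).differentiableAt
  have hfg' : f =ᶠ[𝓝 z] fun ζ => ζ ^ p * (1 + ζ ^ n * g ζ) :=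
    eventually_of_mem (hU.mem_nhds hz) hfg
  have hf' : z * deriv f z
      = z ^ p * (p * (1 + z ^ n * g z) + z ^ n * (n * g z + z * deriv g z)) := by
    have hh : DifferentiableAt ℂ (fun ζ => 1 + ζ ^ n * g ζ) z :=
      ((differentiableAt_pow n).mul hgz).const_add 1
    rw [hfg'.deriv_eq, mul_deriv_pow_mul hh, deriv_const_add, mul_deriv_pow_mul hgz]
  rw [hF, mul_assoc lam, hf', hfg z hz]
  ring

theorem exists_analyticOnNhd_mul_deriv_div_eq_add_pow_mul {U : Set ℂ} (hU : IsOpen U)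
    {F S : ℂ → ℂ} {c : ℂ} {p n : ℕ} (hS : AnalyticOnNhd ℂ S U)
    (hFS : ∀ z ∈ U, F z = z ^ p * (c + z ^ n * S z)) (hD : ∀ z ∈ U, c + z ^ n * S z ≠ 0) :
    ∃ Q : ℂ → ℂ, AnalyticOnNhd ℂ Q U ∧
      ∀ z ∈ U, z ≠ 0 → z * deriv F z / F z = p + z ^ n * Q z :=
  ⟨fun z => (n * S z + z * deriv S z) / (c + z ^ n * S z),
    fun z hz => ((analyticAt_const.mul (hS z hz)).add (analyticAt_id.mul (hS.deriv z hz))).div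
      (analyticAt_const.add ((analyticAt_id.pow n).mul (hS z hz))) (hD z hz),
    fun z hz hz0 => mul_deriv_div_eq_add_pow_mul (hS z hz).differentiableAt
      (eventually_of_mem (hU.mem_nhds hz) hFS)
      (by rw [hFS z hz]; exact mul_ne_zero (pow_ne_zero p hz0) (hD z hz))⟩

theorem inv_add_le_re_div {p M : ℝ} {W : ℂ} (hW : ‖W‖ = 1) (hp : 0 ≤ p) (hpM : p ≤ M)
    (hq : (p : ℂ) + M * W ≠ 0) : (M + p)⁻¹ ≤ (W / (p + M * W)).re := by
  have hx : W.re * W.re + W.im * W.im = 1 := by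
    rw [← normSq_apply, ← Complex.sq_norm, hW, one_pow]
  have hx1 : W.re ≤ 1 := by nlinarith [mul_self_nonneg W.im, mul_self_nonneg (W.re - 1)]
  have hMp : 0 < M + p := by
    rcases (add_nonneg (hp.trans hpM) hp).lt_or_eq with h | h
    · exact h
    · obtain ⟨rfl, rfl⟩ : p = 0 ∧ M = 0 := ⟨by linarith, by linarith⟩
      simp at hq
  rw [div_re, ← add_div, inv_eq_one_div, div_le_div_iff₀ hMp (normSq_pos.mpr hq)]
  simp only [normSq_apply, add_re, add_im, mul_re, mul_im, ofReal_re, ofReal_im]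
  -- the difference of the two sides is `p (M - p) (1 - Re W)`
  linarith [mul_nonneg (mul_nonneg hp (sub_nonneg.mpr hpM)) (sub_nonneg.mpr hx1),
    congrArg (M * p * ·) hx]

theorem mul_div_le_re_mul_div {p M n k : ℝ} {W : ℂ} (hW : ‖W‖ = 1) (hp : 0 ≤ p) (hpM : p ≤ M)
    (hn : 0 ≤ n) (hk : n ≤ k) (hq : (p : ℂ) + M * W ≠ 0) :
    n * M / (M + p) ≤ (M * k * W / (p + M * W)).re := by
  have h := inv_add_le_re_div hW hp hpM hq
  have hM : 0 ≤ M := hp.trans hpM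
  rw [show (M * k * W / (p + M * W) : ℂ) = ((M * k : ℝ) : ℂ) * (W / (p + M * W)) by
    push_cast; ring, re_ofReal_mul, div_eq_mul_inv]
  calc n * M * (M + p)⁻¹ ≤ M * n * (W / (p + M * W)).re := by
        rw [mul_comm n]; gcongr
    _ ≤ M * k * (W / (p + M * W)).re := by gcongr; exact (inv_nonneg.mpr (by linarith)).trans h

theorem le_of_hasDerivAt_of_le_pow_mul {N : ℝ → ℝ} {d : ℝ} {m : ℕ} (hd : HasDerivAt N d 1)
    (hle : ∀ t ∈ Ioo (0 : ℝ) 1, N t ≤ t ^ m * N 1) : m * N 1 ≤ d := by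
  have hslope : Tendsto (slope N 1) (𝓝[<] 1) (𝓝 d) :=
    (hasDerivAt_iff_tendsto_slope.mp hd).mono_left (nhdsWithin_mono _ fun _ h => ne_of_lt h)
  have hgeom : Tendsto (fun t : ℝ => (∑ i ∈ Finset.range m, t ^ i) * N 1) (𝓝[<] 1)
      (𝓝 (m * N 1)) := by
    have hc : Continuous fun t : ℝ => (∑ i ∈ Finset.range m, t ^ i) * N 1 := by fun_prop
    simpa using (hc.tendsto 1).mono_left nhdsWithin_le_nhds
  refine le_of_tendsto_of_tendsto hgeom hslope ?_
  filter_upwards [Ioo_mem_nhdsLT (show (0 : ℝ) < 1 by norm_num)] with t ht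
  rw [slope_def_field, le_div_iff_of_neg (by linarith [ht.2])]
  calc N t - N 1 ≤ (t ^ m - 1) * N 1 := by linarith [hle t ht]
    _ = _ := by rw [← geom_sum_mul]; ring

theorem norm_pow_mul_mul_pow_le {n : ℕ} {E : ℂ → ℂ} {r C : ℝ} (hr : 0 < r)
    (hE : DiffContOnCl ℂ E (ball 0 r)) (hC : ∀ ζ : ℂ, ‖ζ‖ = r → ‖ζ ^ n * E ζ‖ ≤ C)
    {z : ℂ} (hz : ‖z‖ ≤ r) : ‖z ^ n * E z‖ * r ^ n ≤ ‖z‖ ^ n * C := by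
  have hrn : 0 < r ^ n := pow_pos hr n
  have hEz : ‖E z‖ ≤ C / r ^ n := by
    refine norm_le_of_forall_mem_frontier_norm_le isBounded_ball hE (fun ζ hζ => ?_)
      (by rwa [closure_ball 0 hr.ne', mem_closedBall_zero_iff])
    rw [frontier_ball 0 hr.ne', mem_sphere_zero_iff_norm] at hζ
    rw [le_div_iff₀ hrn, mul_comm, ← hζ, ← norm_pow, ← norm_mul]
    exact hC ζ hζ
  rw [norm_mul, norm_pow, mul_assoc]
  gcongr
  rwa [← le_div_iff₀ hrn]

theorem le_inner_mul_deriv_of_norm_le_pow_mul {w : ℂ → ℂ} {z : ℂ} {n : ℕ}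
    (hw : DifferentiableAt ℂ w z) (hle : ∀ t ∈ Ioo (0 : ℝ) 1, ‖w (t * z)‖ ≤ t ^ n * ‖w z‖) :
    n * ‖w z‖ ^ 2 ≤ ⟪w z, z * deriv w z⟫_ℝ := by
  have hw' : HasDerivAt w (deriv w z) (((1 : ℝ) : ℂ) * z) := by simpa using hw.hasDerivAt
  have hN := ((hw'.comp ((1 : ℝ) : ℂ) (hasDerivAt_mul_const z)).comp_ofReal).norm_sq
  have := le_of_hasDerivAt_of_le_pow_mul (m := 2 * n) hN fun t ht => ?_
  · push_cast at this
    simp only [Function.comp_apply, one_mul, mul_comm (deriv w z)] at this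
    linarith
  · simp only [Function.comp_apply, ofReal_one, one_mul, pow_mul]
    exact pow_le_pow_left₀ (norm_nonneg _) (hle t ht) 2 |>.trans_eq (by ring)

theorem inner_mul_I_mul_deriv_eq_zero {w : ℂ → ℂ} {z : ℂ} (hw : DifferentiableAt ℂ w z)
    (hle : ∀ ζ : ℂ, ‖ζ‖ = ‖z‖ → ‖w ζ‖ ≤ ‖w z‖) : ⟪w z, I * (z * deriv w z)⟫_ℝ = 0 := by
  have hrot : HasDerivAt (fun ζ : ℂ => exp (ζ * I) * z) (I * z) ((0 : ℝ) : ℂ) := by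
    simpa using ((hasDerivAt_mul_const I).cexp (x := 0)).mul_const z
  have hw' : HasDerivAt w (deriv w z) (exp (((0 : ℝ) : ℂ) * I) * z) := by
    simpa using hw.hasDerivAt
  have hN := ((hw'.comp ((0 : ℝ) : ℂ) hrot).comp_ofReal).norm_sq
  have hmax : IsLocalMax (fun θ : ℝ => ‖(w ∘ fun ζ : ℂ => exp (ζ * I) * z) θ‖ ^ 2) 0 :=
    Eventually.of_forall fun θ => by
      simp only [Function.comp_apply, ofReal_zero, zero_mul, exp_zero, one_mul]
      gcongr
      exact hle _ (by rw [norm_mul, norm_exp_ofReal_mul_I, one_mul])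
  have := hmax.hasDerivAt_eq_zero hN
  simp only [Function.comp_apply, ofReal_zero, zero_mul, exp_zero, one_mul] at this
  rw [show I * (z * deriv w z) = deriv w z * (I * z) by ring]
  linarith

theorem eq_inner_div_mul_of_inner_I_mul_eq_zero {W c : ℂ} (hW : W ≠ 0)
    (h : ⟪W, I * c⟫_ℝ = 0) : c = ((⟪W, c⟫_ℝ / ‖W‖ ^ 2 : ℝ) : ℂ) * W := by
  have hW2 : ‖W‖ ^ 2 ≠ 0 := by positivity
  simp only [Complex.inner, mul_re, mul_im, I_re, I_im, conj_re, conj_im] at h ⊢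
  apply Complex.ext <;> simp only [re_ofReal_mul, im_ofReal_mul] <;> field_simp <;>
    rw [Complex.sq_norm, normSq_apply]
  · linear_combination W.im * h
  · linear_combination (-W.re) * h

-- Jack's lemma
theorem exists_le_mul_deriv_eq_mul_of_isMaxOn {n : ℕ} {E : ℂ → ℂ} {z₁ : ℂ} (hz₁ : z₁ ≠ 0)
    (hE : ∀ z ∈ closedBall (0 : ℂ) ‖z₁‖, DifferentiableAt ℂ E z)
    (hmax : IsMaxOn (fun z => ‖z ^ n * E z‖) (closedBall 0 ‖z₁‖) z₁)
    (hne : z₁ ^ n * E z₁ ≠ 0) :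
    ∃ k : ℝ, n ≤ k ∧ z₁ * deriv (fun z => z ^ n * E z) z₁ = k * (z₁ ^ n * E z₁) := by
  set w := fun z => z ^ n * E z
  have hr : 0 < ‖z₁‖ := norm_pos_iff.mpr hz₁
  have hw : DifferentiableAt ℂ w z₁ :=
    (differentiableAt_pow n).mul (hE z₁ (mem_closedBall_zero_iff.mpr le_rfl))
  have hdc : DiffContOnCl ℂ E (ball 0 ‖z₁‖) :=
    ⟨fun z hz => (hE z (ball_subset_closedBall hz)).differentiableWithinAt, by
      rw [closure_ball 0 hr.ne']
      exact fun z hz => (hE z hz).continuousAt.continuousWithinAt⟩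
  have hsphere : ∀ ζ : ℂ, ‖ζ‖ = ‖z₁‖ → ‖w ζ‖ ≤ ‖w z₁‖ := fun ζ hζ =>
    hmax (mem_closedBall_zero_iff.mpr hζ.le)
  have hradial : n * ‖w z₁‖ ^ 2 ≤ ⟪w z₁, z₁ * deriv w z₁⟫_ℝ := by
    refine le_inner_mul_deriv_of_norm_le_pow_mul hw fun t ht => ?_
    have htz : ‖(t : ℂ) * z₁‖ = t * ‖z₁‖ := by
      rw [norm_mul, norm_real, Real.norm_of_nonneg ht.1.le]
    have := norm_pow_mul_mul_pow_le hr hdc hsphere (z := t * z₁)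
      (by rw [htz]; exact mul_le_of_le_one_left hr.le ht.2.le)
    exact le_of_mul_le_mul_right (this.trans_eq (by rw [htz]; ring)) (pow_pos hr n)
  refine ⟨⟪w z₁, z₁ * deriv w z₁⟫_ℝ / ‖w z₁‖ ^ 2, ?_,
    eq_inner_div_mul_of_inner_I_mul_eq_zero hne (inner_mul_I_mul_deriv_eq_zero hw hsphere)⟩
  rwa [le_div_iff₀ (by positivity)]

theorem exists_norm_eq_one_isMaxOn {E : Type*} [NormedAddCommGroup E] {w : ℂ → E} {z₀ : ℂ}
    (hw : ContinuousOn w (closedBall 0 ‖z₀‖)) (h0 : ‖w 0‖ < 1) (hz₀ : 1 ≤ ‖w z₀‖) :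
    ∃ z₁ ∈ closedBall (0 : ℂ) ‖z₀‖, ‖w z₁‖ = 1 ∧ IsMaxOn (‖w ·‖) (closedBall 0 ‖z₁‖) z₁ := by
  set S := closedBall (0 : ℂ) ‖z₀‖ ∩ (‖w ·‖) ⁻¹' Ici 1
  have hS : IsCompact S := (isCompact_closedBall 0 ‖z₀‖).of_isClosed_subset
    (hw.norm.preimage_isClosed_of_isClosed isClosed_closedBall isClosed_Ici) inter_subset_left
  obtain ⟨z₁, ⟨hz₁, hwz₁⟩, hmin⟩ :=
    hS.exists_isMinOn ⟨z₀, by simp [S, hz₀]⟩ continuous_norm.continuousOn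
  have hz₁0 : 0 < ‖z₁‖ := norm_pos_iff.mpr fun h => by
    rw [h] at hwz₁; exact (lt_of_lt_of_le h0 hwz₁).false
  have hsub : closedBall (0 : ℂ) ‖z₁‖ ⊆ closedBall 0 ‖z₀‖ :=
    closedBall_subset_closedBall (by simpa using hz₁)
  have hinside : ∀ z ∈ ball (0 : ℂ) ‖z₁‖, ‖w z‖ < 1 := fun z hz => by
    by_contra! h
    exact (hmin ⟨hsub (ball_subset_closedBall hz), h⟩).not_gt (mem_ball_zero_iff.mp hz)
  have hle : ∀ z ∈ closedBall (0 : ℂ) ‖z₁‖, ‖w z‖ ≤ 1 := by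
    rw [← closure_ball 0 hz₁0.ne']
    intro z hz
    have hc : ContinuousOn (‖w ·‖) (closure (ball (0 : ℂ) ‖z₁‖)) :=
      hw.norm.mono (by rw [closure_ball 0 hz₁0.ne']; exact hsub)
    exact closure_minimal (by rintro _ ⟨y, hy, rfl⟩; exact (hinside y hy).le) isClosed_Iic
      (hc.image_closure (mem_image_of_mem _ hz))
  have hwz₁' : ‖w z₁‖ = 1 := le_antisymm (hle z₁ (by simp)) hwz₁
  exact ⟨z₁, hz₁, hwz₁', fun z hz => by simpa [hwz₁'] using hle z hz⟩

theorem exists_mul_deriv_eq_mul_of_one_le_norm {n : ℕ} {E : ℂ → ℂ} (hn : 0 < n)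
    (hE : AnalyticOnNhd ℂ E (ball 0 1)) {z₀ : ℂ} (hz₀ : z₀ ∈ ball (0 : ℂ) 1)
    (h : 1 ≤ ‖z₀ ^ n * E z₀‖) :
    ∃ z₁ ∈ ball (0 : ℂ) 1, z₁ ≠ 0 ∧ ‖z₁ ^ n * E z₁‖ = 1 ∧
      ∃ k : ℝ, n ≤ k ∧ z₁ * deriv (fun z => z ^ n * E z) z₁ = k * (z₁ ^ n * E z₁) := by
  have hsub : closedBall (0 : ℂ) ‖z₀‖ ⊆ ball 0 1 :=
    closedBall_subset_ball (mem_ball_zero_iff.mp hz₀)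
  obtain ⟨z₁, hz₁, hwz₁, hmax⟩ := exists_norm_eq_one_isMaxOn
    (((analyticOnNhd_id.pow n).mul hE).continuousOn.mono hsub) (by simp [hn.ne']) h
  have hz₁0 : z₁ ≠ 0 := by rintro rfl; simp [hn.ne'] at hwz₁
  have hsub₁ : closedBall (0 : ℂ) ‖z₁‖ ⊆ ball 0 1 :=
    (closedBall_subset_closedBall (mem_closedBall_zero_iff.mp hz₁)).trans hsub
  exact ⟨z₁, hsub hz₁, hz₁0, hwz₁, exists_le_mul_deriv_eq_mul_of_isMaxOn hz₁0
    (fun z hz => (hE z (hsub₁ hz)).differentiableAt) hmax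
    (norm_ne_zero_iff.mp (hwz₁.trans_ne one_ne_zero))⟩

theorem norm_mul_deriv_div_sub_lt_of_re_lt {F Q : ℂ → ℂ} {p M : ℝ} {n : ℕ} (hp : 0 < p)
    (hpM : p ≤ M) (hn : 0 < n) (hF : AnalyticOnNhd ℂ F (ball 0 1))
    (hQ : AnalyticOnNhd ℂ Q (ball 0 1))
    (hne : ∀ z ∈ ball (0 : ℂ) 1, z ≠ 0 → F z * deriv F z ≠ 0)
    (hFQ : ∀ z ∈ ball (0 : ℂ) 1, z ≠ 0 → z * deriv F z / F z = p + z ^ n * Q z)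
    (hre : ∀ z ∈ ball (0 : ℂ) 1, z ≠ 0 →
      (-(z * deriv F z / F z) + 1 + z * deriv (deriv F) z / deriv F z).re < n * M / (M + p))
    {z₀ : ℂ} (hz₀ : z₀ ∈ ball (0 : ℂ) 1) (hz₀0 : z₀ ≠ 0) :
    ‖z₀ * deriv F z₀ / F z₀ - p‖ < M := by
  have hM : 0 < M := hp.trans_le hpM
  set w : ℂ → ℂ := fun z => z ^ n * (Q z / M)
  have hFw : ∀ z ∈ ball (0 : ℂ) 1, z ≠ 0 → z * deriv F z / F z = p + M * w z := fun z hz hz0 => by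
    rw [hFQ z hz hz0, mul_left_comm, mul_div_cancel₀ _ (ofReal_ne_zero.mpr hM.ne')]
  by_contra! h
  have hwz₀ : 1 ≤ ‖w z₀‖ := by
    rw [hFw z₀ hz₀ hz₀0, add_sub_cancel_left, norm_mul, norm_real, Real.norm_of_nonneg hM.le] at h
    exact (le_mul_iff_one_le_right hM).mp h
  obtain ⟨z₁, hz₁, hz₁0, hwz₁, k, hk, hderiv⟩ := exists_mul_deriv_eq_mul_of_one_le_norm
    (E := fun z => Q z / M) hn
    (fun z hz => (hQ z hz).div analyticAt_const (ofReal_ne_zero.mpr hM.ne')) hz₀ hwz₀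
  have hF0 := hne z₁ hz₁ hz₁0
  have hq : (p : ℂ) + M * w z₁ ≠ 0 := by
    rw [← hFw z₁ hz₁ hz₁0]
    exact div_ne_zero (mul_ne_zero hz₁0 (right_ne_zero_of_mul hF0)) (left_ne_zero_of_mul hF0)
  have hP : (fun z => z * deriv F z / F z) =ᶠ[𝓝 z₁] fun z => p + M * w z :=
    eventually_of_mem ((isOpen_ball.inter isOpen_compl_singleton).mem_nhds ⟨hz₁, hz₁0⟩)
      fun z hz => hFw z hz.1 hz.2
  have hkey : -(z₁ * deriv F z₁ / F z₁) + 1 + z₁ * deriv (deriv F) z₁ / deriv F z₁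
      = M * k * w z₁ / (p + M * w z₁) := by
    rw [← mul_logDeriv_mul_deriv_div hz₁0 (left_ne_zero_of_mul hF0) (right_ne_zero_of_mul hF0)
      (hF z₁ hz₁).differentiableAt (hF.deriv z₁ hz₁).differentiableAt, logDeriv_apply,
      hP.deriv_eq, hP.eq_of_nhds, deriv_const_add, deriv_const_mul_field, mul_div_assoc',
      mul_left_comm, hderiv]
    ring
  have := hre z₁ hz₁ hz₁0
  rw [hkey] at this
  linarith [mul_div_le_re_mul_div hwz₁ hp.le hpM (Nat.cast_nonneg n) hk hq]

theorem stmt_11_general (p n : ℕ) (hp : 0 < p) (hn : 0 < n) (lam : ℝ)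
    (hlam0 : 0 ≤ lam)
    (f F : ℂ → ℂ)
    (hser : ∃ a : ℕ → ℂ, ∀ z ∈ ball (0:ℂ) 1,
      HasSum (fun k : ℕ => a k * z ^ (p + n + k)) (f z - z ^ p))
    (hF : ∀ z, F z = (1 - (lam:ℂ)) * f z + (lam:ℂ) * z * deriv f z)
    (hne : ∀ z ∈ ball (0:ℂ) 1, z ≠ 0 → F z * deriv F z ≠ 0)
    (M : ℝ) (hM : (p:ℝ) ≤ M)
    (hhyp : ∀ z ∈ ball (0:ℂ) 1, z ≠ 0 →
      (-(z * deriv F z / F z) + 1 + z * deriv (deriv F) z / deriv F z).re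
        < (n:ℝ) * M / (M + (p:ℝ))) :
    ∀ z ∈ ball (0:ℂ) 1, z ≠ 0 →
      ‖z * deriv F z / F z - (p:ℂ)‖ < M := by
  obtain ⟨a, ha⟩ := hser
  obtain ⟨g, hg, hfg⟩ := exists_analyticOnNhd_eq_pow_mul_of_hasSum ha
  obtain ⟨S, hS, hFS⟩ := exists_eq_pow_mul_const_add_pow_mul (p := p) (n := n) isOpen_ball hg
    (fun z hz => by linear_combination hfg z hz) hF
  have hc : (1 - lam + lam * p : ℂ) ≠ 0 := by
    have hp1 : (1 : ℝ) ≤ p := Nat.one_le_cast.mpr hp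
    exact_mod_cast (show 1 - lam + lam * p ≠ 0 by nlinarith)
  have hD : ∀ z ∈ ball (0 : ℂ) 1, (1 - lam + lam * p : ℂ) + z ^ n * S z ≠ 0 := fun z hz => by
    rcases eq_or_ne z 0 with rfl | hz0
    · simpa [hn.ne'] using hc
    · exact right_ne_zero_of_mul (hFS z hz ▸ left_ne_zero_of_mul (hne z hz hz0))
  obtain ⟨Q, hQ, hFQ⟩ := exists_analyticOnNhd_mul_deriv_div_eq_add_pow_mul isOpen_ball hS hFS hD
  have hFa : AnalyticOnNhd ℂ F (ball 0 1) :=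
    ((analyticOnNhd_id.pow p).mul (analyticOnNhd_const.add ((analyticOnNhd_id.pow n).mul hS))).congr
      isOpen_ball fun z hz => (hFS z hz).symm
  intro z hz hz0
  simpa using norm_mul_deriv_div_sub_lt_of_re_lt (p := p) (Nat.cast_pos.mpr hp) hM hn hFa hQ hne
    (by simpa using hFQ) hhyp hz hz0

theorem stmt_11 (p n : ℕ) (hp : 0 < p) (hn : 0 < n) (lam : ℝ)
    (hlam0 : 0 ≤ lam) (hlam1 : lam ≤ 1)
    (f F : ℂ → ℂ)
    (hf : AnalyticOnNhd ℂ f (ball 0 1))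
    (hser : ∃ a : ℕ → ℂ, ∀ z ∈ ball (0:ℂ) 1,
      HasSum (fun k : ℕ => a k * z ^ (p + n + k)) (f z - z ^ p))
    (hF : ∀ z, F z = (1 - (lam:ℂ)) * f z + (lam:ℂ) * z * deriv f z)
    (hne : ∀ z ∈ ball (0:ℂ) 1, z ≠ 0 → F z * deriv F z ≠ 0)
    (M : ℝ) (hM : (p:ℝ) ≤ M)
    (hhyp : ∀ z ∈ ball (0:ℂ) 1, z ≠ 0 →
      (-(z * deriv F z / F z) + 1 + z * deriv (deriv F) z / deriv F z).re
        < (n:ℝ) * M / (M + (p:ℝ))) :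
    ∀ z ∈ ball (0:ℂ) 1, z ≠ 0 →
      ‖z * deriv F z / F z - (p:ℂ)‖ < M :=
  stmt_11_general p n hp hn lam hlam0 f F hser hF hne M hM hhyp
end

section
/- Let p,n be positive integers, 0 ≤ λ ≤ 1, and let f ∈ A(p,n) with F_λ(z)F_λ'(z) ≠ 0 on U\{0}, where F_λ(z) = (1−λ)f(z) + λzf'(z). Let M ≥ 1/p. If Re[ zF_λ'(z)/F_λ(z) − 1 − zF_λ''(z)/F_λ'(z) ] < nMp/(Mp+1) for all z ∈ U, then |F_λ(z)/(zF_λ'(z)) − 1/p| < M for all z ∈ U. -/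
/-
Put `Q = F / (z F') - 1/p`. The function `f` is `z^p (1 + O(z^n))` with a holomorphic remainder,
hence `F = z^p (α + O(z^n))` and `z F' = z^p (p α + O(z^n))` with `α = 1 - λ + λ p ≥ 1`, so
`Q = z^n φ` with `φ` holomorphic in `U`. The expression in the hypothesis is the logarithmic
derivative `z Q' / (1/p + Q)`. If `|Q| ≥ M` somewhere, let `z₀` maximise `|Q|` on that circle:
Jack's lemma gives `z₀ Q'(z₀) = s Q(z₀)` with `s ≥ n`, and `Re (Q / (1/p + Q)) ≥ M / (M + 1/p)`
as soon as `|Q| ≥ M ≥ 1/p`, which contradicts the hypothesis.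
-/

open Metric Complex Filter Set Topology

theorem analyticOnNhd_tsum_mul_pow {a : ℕ → ℂ}
    (ha : ∀ z ∈ ball (0 : ℂ) 1, Summable fun k => a k * z ^ k) :
    AnalyticOnNhd ℂ (fun z => ∑' k, a k * z ^ k) (ball 0 1) := by
  set P := FormalMultilinearSeries.ofScalars ℂ a
  have hP : 1 ≤ P.radius := by
    refine ENNReal.le_of_forall_nnreal_lt fun r hr => P.le_radius_of_tendsto (l := 0) ?_
    have hr1 : ((r : ℝ) : ℂ) ∈ ball (0 : ℂ) 1 := by
      simpa [mem_ball_zero_iff] using (show (r : ℝ) < 1 by exact_mod_cast hr)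
    simpa [P, FormalMultilinearSeries.ofScalars_norm] using (ha _ hr1).tendsto_atTop_zero.norm
  have hPsum : (fun z => ∑' k, a k * z ^ k) = P.sum :=
    funext fun z => by simp [P, FormalMultilinearSeries.sum, mul_comm]
  have hball : ball (0 : ℂ) 1 ⊆ eball 0 P.radius := by
    simpa using (Metric.eball_coe (x := (0 : ℂ)) (ε := 1)).symm.subset.trans
      (eball_subset_eball hP)
  rw [hPsum]
  exact (P.hasFPowerSeriesOnBall (zero_lt_one.trans_le hP)).analyticOnNhd.mono hball

theorem exists_differentiableOn_eq_pow_mul_of_hasSum {f : ℂ → ℂ} {a : ℕ → ℂ} {m : ℕ}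
    (ha : ∀ z ∈ ball (0 : ℂ) 1, HasSum (fun k => a k * z ^ (m + k)) (f z)) :
    ∃ G : ℂ → ℂ, DifferentiableOn ℂ G (ball 0 1) ∧ ∀ z ∈ ball (0 : ℂ) 1, f z = z ^ m * G z := by
  refine ⟨fun z => ∑' k, a k * z ^ k,
    (analyticOnNhd_tsum_mul_pow fun z hz => ?_).differentiableOn, fun z hz => ?_⟩
  · rcases eq_or_ne z 0 with rfl | hz0
    · exact summable_of_ne_finset_zero (s := {0}) fun k hk => by
        simp [zero_pow (Finset.notMem_singleton.1 hk)]
    · refine ((ha z hz).summable.mul_left (z ^ m)⁻¹).congr fun k => ?_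
      rw [pow_add]
      field_simp
  · rw [← (ha z hz).tsum_eq, ← tsum_mul_left]
    simp only [pow_add]
    congr 1 with k
    ring

theorem mul_deriv_eq_pow_mul_of_eventuallyEq {𝕜 : Type*} [NontriviallyNormedField 𝕜]
    {f G : 𝕜 → 𝕜} {z c : 𝕜} (p n : ℕ) (hG : DifferentiableAt 𝕜 G z)
    (hf : f =ᶠ[𝓝 z] fun w => w ^ p * (c + w ^ n * G w)) :
    z * deriv f z = z ^ p * (p * c + z ^ n * ((p + n) * G z + z * deriv G z)) := by
  rw [hf.deriv_eq, ((hasDerivAt_pow p z).fun_mul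
    (((hasDerivAt_pow n z).fun_mul hG.hasDerivAt).const_add c)).deriv]
  rcases p with _ | p <;> rcases n with _ | n <;>
    simp only [Nat.cast_zero, Nat.cast_add, Nat.cast_one, zero_tsub, add_tsub_cancel_right,
      pow_zero, pow_succ, mul_one, one_mul, zero_mul, zero_add, add_zero] <;> ring

theorem mul_logDeriv_div_mul_deriv {𝕜 : Type*} [NontriviallyNormedField 𝕜] {F : 𝕜 → 𝕜} {z : 𝕜}
    (hz : z ≠ 0) (hF : DifferentiableAt 𝕜 F z) (hF' : DifferentiableAt 𝕜 (deriv F) z)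
    (hFz : F z ≠ 0) (hF'z : deriv F z ≠ 0) :
    z * logDeriv (fun w => F w / (w * deriv F w)) z
      = z * deriv F z / F z - 1 - z * deriv (deriv F) z / deriv F z := by
  rw [logDeriv_div (f := F) (g := fun w => w * deriv F w) z hFz (mul_ne_zero hz hF'z) hF
      (differentiableAt_id.mul hF'),
    logDeriv_mul (f := fun w => w) (g := deriv F) z hz hF'z differentiableAt_id hF',
    logDeriv_id', logDeriv_apply, logDeriv_apply]
  field_simp
  ring

/-- `F z = c z^p + z^(p+n) H z` on the unit disc with `H` holomorphic there; the class `A(p,n)`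
consists of the `F` with `HasLeadingTerm F 1 p n`. -/
def HasLeadingTerm (F : ℂ → ℂ) (c : ℂ) (p n : ℕ) : Prop :=
  ∃ H : ℂ → ℂ, DifferentiableOn ℂ H (ball 0 1) ∧
    ∀ z ∈ ball (0 : ℂ) 1, F z = z ^ p * (c + z ^ n * H z)

namespace HasLeadingTerm

variable {F G : ℂ → ℂ} {c d : ℂ} {p n : ℕ}

theorem of_hasSum {a : ℕ → ℂ}
    (ha : ∀ z ∈ ball (0 : ℂ) 1, HasSum (fun k => a k * z ^ (p + n + k)) (F z - z ^ p)) :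
    HasLeadingTerm F 1 p n := by
  obtain ⟨H, hH, hFH⟩ := exists_differentiableOn_eq_pow_mul_of_hasSum ha
  refine ⟨H, hH, fun z hz => ?_⟩
  linear_combination hFH z hz + H z * pow_add z p n

theorem differentiableOn (hF : HasLeadingTerm F c p n) : DifferentiableOn ℂ F (ball 0 1) := by
  obtain ⟨H, hH, hFH⟩ := hF
  exact ((differentiableOn_pow p).fun_mul
    (((differentiableOn_pow n).fun_mul hH).const_add c)).congr hFH

theorem const_mul_add_const_mul (hF : HasLeadingTerm F c p n) (hG : HasLeadingTerm G d p n)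
    (a b : ℂ) :
    HasLeadingTerm (fun z => a * F z + b * G z) (a * c + b * d) p n := by
  obtain ⟨H, hH, hFH⟩ := hF
  obtain ⟨K, hK, hGK⟩ := hG
  refine ⟨fun z => a * H z + b * K z, (hH.const_mul a).add (hK.const_mul b), fun z hz => ?_⟩
  simp only [hFH z hz, hGK z hz]
  ring

theorem mul_deriv (hF : HasLeadingTerm F c p n) :
    HasLeadingTerm (fun z => z * deriv F z) (p * c) p n := by
  obtain ⟨H, hH, hFH⟩ := hF
  refine ⟨fun z => (p + n) * H z + z * deriv H z,
    (hH.const_mul _).add (differentiableOn_id.mul (hH.deriv isOpen_ball)), fun z hz => ?_⟩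
  refine mul_deriv_eq_pow_mul_of_eventuallyEq p n (hH.differentiableAt (isOpen_ball.mem_nhds hz)) ?_
  filter_upwards [isOpen_ball.mem_nhds hz] with w hw using hFH w hw

theorem exists_div_mul_deriv_sub_eq_pow_mul (hF : HasLeadingTerm F c p n) (hn : 0 < n)
    (hc : c ≠ 0) (hp : p ≠ 0) (hF' : ∀ z ∈ ball (0 : ℂ) 1, z ≠ 0 → deriv F z ≠ 0) :
    ∃ φ : ℂ → ℂ, DifferentiableOn ℂ φ (ball 0 1) ∧
      ∀ z ∈ ball (0 : ℂ) 1, z ≠ 0 → F z / (z * deriv F z) - 1 / p = z ^ n * φ z := by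
  obtain ⟨K, hK, hFK⟩ := hF.mul_deriv
  obtain ⟨H, hH, hFH⟩ := hF
  have hp0 : (p : ℂ) ≠ 0 := Nat.cast_ne_zero.2 hp
  have hD : ∀ z ∈ ball (0 : ℂ) 1, p * c + z ^ n * K z ≠ 0 := by
    intro z hz
    rcases eq_or_ne z 0 with rfl | hz0
    · simpa [zero_pow hn.ne'] using mul_ne_zero hp0 hc
    · have hFKz : z * deriv F z = z ^ p * (p * c + z ^ n * K z) := hFK z hz
      exact right_ne_zero_of_mul (hFKz ▸ mul_ne_zero hz0 (hF' z hz hz0))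
  refine ⟨fun z => (p * H z - K z) / (p * (p * c + z ^ n * K z)), ?_, fun z hz hz0 => ?_⟩
  · exact ((hH.const_mul _).sub hK).div
      ((((differentiableOn_pow n).mul hK).const_add _).const_mul _)
      fun z hz => mul_ne_zero hp0 (hD z hz)
  · have hDz : c * p + z ^ n * K z ≠ 0 := by rw [mul_comm c]; exact hD z hz
    have hFKz : z * deriv F z = z ^ p * (p * c + z ^ n * K z) := hFK z hz
    rw [hFKz, hFH z hz]
    field_simp
    ring

end HasLeadingTerm

theorem HasDerivAt.nonneg_of_isLocalMaxOn_Iic {f : ℝ → ℝ} {f' b : ℝ} (hf : HasDerivAt f f' b)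
    (hmax : IsLocalMaxOn f (Iic b) b) : 0 ≤ f' := by
  have hcone : (-1 : ℝ) ∈ posTangentConeAt (Iic b) b :=
    mem_posTangentConeAt_of_segment_subset (by
      rw [segment_symm, segment_eq_Icc (by linarith)]
      exact Icc_subset_Iic_self)
  simpa using hmax.hasFDerivWithinAt_nonpos hf.hasFDerivAt.hasFDerivWithinAt hcone

theorem norm_pow_mul_le_of_forall_mem_sphere {φ : ℂ → ℂ} {n : ℕ} {r C : ℝ} (hr : 0 < r)
    (hφ : DifferentiableOn ℂ φ (closedBall 0 r))
    (hC : ∀ w ∈ sphere (0 : ℂ) r, ‖w ^ n * φ w‖ ≤ C) :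
    ∀ z ∈ closedBall (0 : ℂ) r, ‖z ^ n * φ z‖ ≤ C * (‖z‖ / r) ^ n := by
  have hφC : ∀ z ∈ closedBall (0 : ℂ) r, ‖φ z‖ ≤ C / r ^ n := by
    intro z hz
    refine norm_le_of_forall_mem_frontier_norm_le isBounded_ball (hφ.diffContOnCl_ball le_rfl)
      (fun w hw => ?_) (by rwa [closure_ball 0 hr.ne'])
    rw [frontier_ball 0 hr.ne'] at hw
    have hw' := hC w hw
    rw [norm_mul, norm_pow, mem_sphere_zero_iff_norm.1 hw] at hw'
    rw [le_div_iff₀ (by positivity)]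
    linarith
  intro z hz
  calc ‖z ^ n * φ z‖ = ‖z‖ ^ n * ‖φ z‖ := by rw [norm_mul, norm_pow]
    _ ≤ ‖z‖ ^ n * (C / r ^ n) := by gcongr; exact hφC z hz
    _ = C * (‖z‖ / r) ^ n := by rw [div_pow]; ring

theorem nat_le_re_mul_deriv_div {g : ℂ → ℂ} {g' z₀ : ℂ} {n : ℕ} (hg : HasDerivAt g g' z₀)
    (hg₀ : g z₀ ≠ 0) (hbound : ∀ r ∈ Ioc (0 : ℝ) 1, ‖g (r * z₀)‖ ≤ ‖g z₀‖ * r ^ n) :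
    (n : ℝ) ≤ (z₀ * g' / g z₀).re := by
  set h : ℝ → ℝ := fun r => (g (r * z₀) / g z₀).re - r ^ n
  have hray : HasDerivAt (fun w : ℂ => g (w * z₀) / g z₀) (g' * z₀ / g z₀) ((1 : ℝ) : ℂ) := by
    have hlin : HasDerivAt (fun w : ℂ => w * z₀) z₀ 1 := by
      simpa using (hasDerivAt_id (1 : ℂ)).mul_const z₀
    exact (hg.comp_of_eq _ hlin (by simp)).div_const (g z₀)
  have hderiv : HasDerivAt h ((z₀ * g' / g z₀).re - n) 1 :=
    (hray.real_of_complex.sub (hasDerivAt_pow n (1 : ℝ))).congr_deriv (by simp [mul_comm])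
  have hmax : IsLocalMaxOn h (Iic 1) 1 := by
    filter_upwards [inter_mem_nhdsWithin (Iic (1 : ℝ)) (Ioi_mem_nhds one_pos)] with r hr
    have hnorm : ‖g (r * z₀) / g z₀‖ ≤ r ^ n := by
      rw [norm_div, div_le_iff₀ (norm_pos_iff.2 hg₀)]
      exact (hbound r ⟨hr.2, hr.1⟩).trans_eq (mul_comm _ _)
    simp only [h, ofReal_one, one_mul, div_self hg₀, one_re, one_pow, sub_self]
    linarith [re_le_norm (g (r * z₀) / g z₀)]
  linarith [hderiv.nonneg_of_isLocalMaxOn_Iic hmax]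

theorem im_mul_deriv_div_eq_zero_of_isMaxOn_sphere {g : ℂ → ℂ} {g' z₀ : ℂ}
    (hg : HasDerivAt g g' z₀) (hmax : IsMaxOn (‖g ·‖) (sphere 0 ‖z₀‖) z₀) :
    (z₀ * g' / g z₀).im = 0 := by
  set γ : ℝ → ℂ := fun θ => g (z₀ * exp (θ * I))
  have hγ : HasDerivAt γ (g' * (z₀ * I)) 0 := by
    have hrot : HasDerivAt (fun w : ℂ => z₀ * exp (w * I)) (z₀ * I) 0 := by
      simpa using (((hasDerivAt_id (0 : ℂ)).mul_const I).cexp).const_mul z₀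
    exact (hg.comp_of_eq 0 hrot (by simp)).comp_ofReal
  have hloc : IsLocalMax (fun θ => ‖γ θ‖ ^ 2) 0 := Eventually.of_forall fun θ => by
    have hθ : z₀ * exp (θ * I) ∈ sphere (0 : ℂ) ‖z₀‖ := by
      simp [norm_exp_ofReal_mul_I]
    have := hmax hθ
    simp only [γ, ofReal_zero, zero_mul, exp_zero, mul_one]
    gcongr
    exact this
  have h0 := hloc.hasDerivAt_eq_zero hγ.norm_sq
  simp only [γ, ofReal_zero, zero_mul, exp_zero, mul_one, Complex.inner, mul_re, mul_im, I_re,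
    I_im, conj_re, conj_im, mul_eq_zero, OfNat.ofNat_ne_zero, false_or] at h0
  have hcross : (z₀ * g').im * (g z₀).re - (z₀ * g').re * (g z₀).im = 0 := by
    simp only [mul_re, mul_im]
    linarith
  rw [div_im, ← sub_div, hcross, zero_div]

/-- Jack's lemma. -/
theorem exists_real_mul_deriv_eq_of_isMaxOn_sphere {g φ : ℂ → ℂ} {n : ℕ} {z₀ : ℂ} (hz₀ : z₀ ≠ 0)
    (hφ : DifferentiableOn ℂ φ (closedBall 0 ‖z₀‖))
    (hgφ : ∀ z ∈ closedBall (0 : ℂ) ‖z₀‖, z ≠ 0 → g z = z ^ n * φ z)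
    (hg : DifferentiableAt ℂ g z₀) (hg₀ : g z₀ ≠ 0) (hmax : IsMaxOn (‖g ·‖) (sphere 0 ‖z₀‖) z₀) :
    ∃ s : ℝ, n ≤ s ∧ z₀ * deriv g z₀ = s * g z₀ := by
  have hR : 0 < ‖z₀‖ := norm_pos_iff.2 hz₀
  have hschwarz := norm_pow_mul_le_of_forall_mem_sphere hR hφ fun w hw => by
    rw [← hgφ w (sphere_subset_closedBall hw) (ne_zero_of_mem_sphere hR.ne' ⟨w, hw⟩)]
    exact hmax hw
  have hre : (n : ℝ) ≤ (z₀ * deriv g z₀ / g z₀).re := by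
    refine nat_le_re_mul_deriv_div hg.hasDerivAt hg₀ fun r hr => ?_
    have hnorm : ‖(r : ℂ) * z₀‖ = r * ‖z₀‖ := by simp [abs_of_pos hr.1]
    have hmem : (r : ℂ) * z₀ ∈ closedBall (0 : ℂ) ‖z₀‖ := by
      rw [mem_closedBall_zero_iff, hnorm]
      exact mul_le_of_le_one_left hR.le hr.2
    rw [hgφ _ hmem (mul_ne_zero (ofReal_ne_zero.2 hr.1.ne') hz₀)]
    simpa [hnorm, hR.ne', abs_of_pos hr.1] using hschwarz _ hmem
  have him := im_mul_deriv_div_eq_zero_of_isMaxOn_sphere hg.hasDerivAt hmax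
  refine ⟨_, hre, ?_⟩
  rw [← div_eq_iff hg₀]
  exact Complex.ext (by simp) (by simp [him])

theorem div_add_le_re_div_add {c M : ℝ} {w : ℂ} (hc : 0 < c) (hcM : c ≤ M) (hMw : M ≤ ‖w‖)
    (hw : (c : ℂ) + w ≠ 0) : M / (M + c) ≤ (w / (c + w)).re := by
  have hnorm : w.re ^ 2 + w.im ^ 2 = ‖w‖ ^ 2 := by rw [Complex.sq_norm, normSq_apply]; ring
  have hnormSq : normSq (c + w) = c ^ 2 + 2 * c * w.re + ‖w‖ ^ 2 := by
    rw [normSq_apply]; simp only [add_re, add_im, ofReal_re, ofReal_im]; nlinarith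
  rw [div_re, ← add_div, hnormSq, div_le_div_iff₀ (by linarith)
    (by rw [← hnormSq]; exact normSq_pos.2 hw)]
  simp only [add_re, add_im, ofReal_re, ofReal_im, zero_add]
  nlinarith [mul_nonneg (mul_nonneg hc.le (sub_nonneg.2 hMw)) (by linarith : (0:ℝ) ≤ ‖w‖ + c),
    mul_nonneg (mul_nonneg hc.le (sub_nonneg.2 hcM)) (sub_nonneg.2 (re_le_norm w))]

theorem norm_lt_of_re_mul_deriv_div_lt {g φ : ℂ → ℂ} {n : ℕ} {c M : ℝ} (hc : 0 < c) (hcM : c ≤ M)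
    (hφ : DifferentiableOn ℂ φ (ball 0 1))
    (hgφ : ∀ z ∈ ball (0 : ℂ) 1, z ≠ 0 → g z = z ^ n * φ z)
    (hg : ∀ z ∈ ball (0 : ℂ) 1, z ≠ 0 → (c : ℂ) + g z ≠ 0)
    (hre : ∀ z ∈ ball (0 : ℂ) 1, z ≠ 0 → (z * deriv g z / (c + g z)).re < n * M / (M + c)) :
    ∀ z ∈ ball (0 : ℂ) 1, z ≠ 0 → ‖g z‖ < M := by
  have hgd : ∀ z ∈ ball (0 : ℂ) 1, z ≠ 0 → DifferentiableAt ℂ g z := fun z hz hz0 =>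
    ((differentiableAt_pow n).mul
      (hφ.differentiableAt (isOpen_ball.mem_nhds hz))).congr_of_eventuallyEq
      (eventually_of_mem ((isOpen_ball.inter isOpen_ne).mem_nhds ⟨hz, hz0⟩) fun w hw =>
        hgφ w hw.1 hw.2)
  intro z₁ hz₁ hz₁0
  by_contra! hM
  have hR : 0 < ‖z₁‖ := norm_pos_iff.2 hz₁0
  have hsub : closedBall (0 : ℂ) ‖z₁‖ ⊆ ball 0 1 :=
    closedBall_subset_ball (mem_ball_zero_iff.1 hz₁)
  have hcont : ContinuousOn g (sphere 0 ‖z₁‖) := fun z hz =>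
    (hgd z (hsub (sphere_subset_closedBall hz))
      (ne_zero_of_mem_sphere hR.ne' ⟨z, hz⟩)).continuousAt.continuousWithinAt
  obtain ⟨z₀, hz₀, hmax⟩ := (isCompact_sphere 0 ‖z₁‖).exists_isMaxOn
    (NormedSpace.sphere_nonempty.2 hR.le) hcont.norm
  have hz₀R : ‖z₀‖ = ‖z₁‖ := mem_sphere_zero_iff_norm.1 hz₀
  have hz₀0 : z₀ ≠ 0 := ne_zero_of_mem_sphere hR.ne' ⟨z₀, hz₀⟩
  have hz₀1 : z₀ ∈ ball (0 : ℂ) 1 := hsub (sphere_subset_closedBall hz₀)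
  have hMg : M ≤ ‖g z₀‖ := hM.trans (hmax (mem_sphere_zero_iff_norm.2 rfl))
  have hg₀ : g z₀ ≠ 0 := norm_pos_iff.1 (by linarith)
  rw [← hz₀R] at hsub hmax
  obtain ⟨s, hns, hs⟩ := exists_real_mul_deriv_eq_of_isMaxOn_sphere hz₀0 (hφ.mono hsub)
    (fun z hz => hgφ z (hsub hz)) (hgd z₀ hz₀1 hz₀0) hg₀ hmax
  have hlow := div_add_le_re_div_add hc hcM hMg (hg z₀ hz₀1 hz₀0)
  have hupp := hre z₀ hz₀1 hz₀0
  rw [hs, mul_div_assoc, re_ofReal_mul] at hupp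
  have hcontra : (n : ℝ) * M / (M + c) ≤ s * (g z₀ / (c + g z₀)).re := by
    rw [mul_div_assoc]
    exact mul_le_mul hns hlow (div_nonneg (by linarith) (by linarith))
      ((Nat.cast_nonneg n).trans hns)
  linarith

theorem stmt_13_general (p n : ℕ) (hp : 0 < p) (hn : 0 < n) (lam : ℝ)
    (hlam0 : 0 ≤ lam)
    (f F : ℂ → ℂ)
    (hser : ∃ a : ℕ → ℂ, ∀ z ∈ ball (0:ℂ) 1,
      HasSum (fun k : ℕ => a k * z ^ (p + n + k)) (f z - z ^ p))
    (hF : ∀ z, F z = (1 - (lam:ℂ)) * f z + (lam:ℂ) * z * deriv f z)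
    (hne : ∀ z ∈ ball (0:ℂ) 1, z ≠ 0 → F z * deriv F z ≠ 0)
    (M : ℝ) (hM : 1 / (p:ℝ) ≤ M)
    (hhyp : ∀ z ∈ ball (0:ℂ) 1, z ≠ 0 →
      (z * deriv F z / F z - 1 - z * deriv (deriv F) z / deriv F z).re
        < (n:ℝ) * M * (p:ℝ) / (M * (p:ℝ) + 1)) :
    ∀ z ∈ ball (0:ℂ) 1, z ≠ 0 →
      ‖F z / (z * deriv F z) - 1 / (p:ℂ)‖ < M := by
  have hf : HasLeadingTerm f 1 p n := .of_hasSum hser.choose_spec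
  have hFlam : HasLeadingTerm F (1 - lam + lam * p) p n := by
    convert hf.const_mul_add_const_mul hf.mul_deriv (1 - lam) lam using 1
    · exact funext fun z => by rw [hF]; ring
    · ring
  have hα : (1 - lam + lam * p : ℂ) ≠ 0 := by
    have : (1 : ℝ) ≤ 1 - lam + lam * p := by nlinarith [(Nat.one_le_cast (α := ℝ)).2 hp]
    exact_mod_cast (by linarith : 1 - lam + lam * p ≠ (0 : ℝ))
  obtain ⟨φ, hφ, hFφ⟩ := hFlam.exists_div_mul_deriv_sub_eq_pow_mul hn hα hp.ne'
    fun z hz hz0 => right_ne_zero_of_mul (hne z hz hz0)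
  have hFd := hFlam.differentiableOn
  refine norm_lt_of_re_mul_deriv_div_lt (g := fun z => F z / (z * deriv F z) - 1 / p)
    (c := 1 / p) (by positivity) hM hφ hFφ (fun z hz hz0 => ?_) (fun z hz hz0 => ?_)
  · push_cast
    rw [add_sub_cancel]
    exact div_ne_zero (left_ne_zero_of_mul (hne z hz hz0))
      (mul_ne_zero hz0 (right_ne_zero_of_mul (hne z hz hz0)))
  · have hbound : (n : ℝ) * M * p / (M * p + 1) = n * M / (M + 1 / p) := by field_simp
    rw [← hbound]
    convert hhyp z hz hz0 using 2
    push_cast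
    rw [add_sub_cancel, deriv_sub_const, mul_div_assoc, ← logDeriv_apply]
    exact mul_logDeriv_div_mul_deriv hz0 (hFd.differentiableAt (isOpen_ball.mem_nhds hz))
      ((hFd.deriv isOpen_ball).differentiableAt (isOpen_ball.mem_nhds hz))
      (left_ne_zero_of_mul (hne z hz hz0)) (right_ne_zero_of_mul (hne z hz hz0))

theorem stmt_13 (p n : ℕ) (hp : 0 < p) (hn : 0 < n) (lam : ℝ)
    (hlam0 : 0 ≤ lam) (hlam1 : lam ≤ 1)
    (f F : ℂ → ℂ)
    (hf : AnalyticOnNhd ℂ f (ball 0 1))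
    (hser : ∃ a : ℕ → ℂ, ∀ z ∈ ball (0:ℂ) 1,
      HasSum (fun k : ℕ => a k * z ^ (p + n + k)) (f z - z ^ p))
    (hF : ∀ z, F z = (1 - (lam:ℂ)) * f z + (lam:ℂ) * z * deriv f z)
    (hne : ∀ z ∈ ball (0:ℂ) 1, z ≠ 0 → F z * deriv F z ≠ 0)
    (M : ℝ) (hM : 1 / (p:ℝ) ≤ M)
    (hhyp : ∀ z ∈ ball (0:ℂ) 1, z ≠ 0 →
      (z * deriv F z / F z - 1 - z * deriv (deriv F) z / deriv F z).re
        < (n:ℝ) * M * (p:ℝ) / (M * (p:ℝ) + 1)) :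
    ∀ z ∈ ball (0:ℂ) 1, z ≠ 0 →
      ‖F z / (z * deriv F z) - 1 / (p:ℂ)‖ < M :=
  stmt_13_general p n hp hn lam hlam0 f F hser hF hne M hM hhyp
end

section
/- Let p be a positive integer and a a nonzero complex number with |a| ≤ (p/(p+2))·( −(M+p) + √((M+p)² + M²) )/M, where M ≥ p. Then for all z in the open unit disk, |a(p+2)z / (p+1 + a(p+2)z)| < M. -/
open Metric Complex

/-! With `w = a (p + 2) z`, the reverse triangle inequality gives `‖w / (p + 1 + w)‖ < M` as soon
as `‖w‖ (1 + M) < M (p + 1)`. Since `√(x² + y²) - x ≤ y² / (2x)`, the bound on `‖a‖` is at most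
`p M / (2 (p + 2) (M + p))`, which is small enough for this. -/

theorem sqrt_sq_add_sq_sub_le {x : ℝ} (hx : 0 < x) (y : ℝ) :
    √(x ^ 2 + y ^ 2) - x ≤ y ^ 2 / (2 * x) := by
  rw [sub_le_iff_le_add, Real.sqrt_le_iff]
  refine ⟨by positivity, ?_⟩
  have hsq : (y ^ 2 / (2 * x) + x) ^ 2 = x ^ 2 + y ^ 2 + (y ^ 2 / (2 * x)) ^ 2 := by
    field_simp
    ring
  nlinarith [sq_nonneg (y ^ 2 / (2 * x))]

theorem norm_div_add_lt {𝕜 : Type*} [NormedDivisionRing 𝕜] {u w : 𝕜} {M : ℝ} (hM : 0 < M)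
    (h : ‖w‖ * (1 + M) < M * ‖u‖) : ‖w / (u + w)‖ < M := by
  have hwu : ‖u‖ - ‖w‖ ≤ ‖u + w‖ := by
    simpa using norm_sub_norm_le u (-w)
  have hgap : ‖w‖ < M * (‖u‖ - ‖w‖) := by linarith
  have hden : 0 < ‖u + w‖ :=
    (pos_of_mul_pos_right ((norm_nonneg w).trans_lt hgap) hM.le).trans_le hwu
  rw [norm_div, div_lt_iff₀ hden]
  exact hgap.trans_le (by gcongr)

noncomputable def coeffBound (p M : ℝ) : ℝ :=
  p / (p + 2) * ((-(M + p) + √((M + p) ^ 2 + M ^ 2)) / M)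

theorem add_two_mul_coeffBound_mul_le {p M : ℝ} (hp : 0 ≤ p) (hM : 0 < M) :
    (p + 2) * coeffBound p M * (1 + M) ≤ M * (p + 1) := by
  have hMp : 0 < M + p := by linarith
  have hc : (-(M + p) + √((M + p) ^ 2 + M ^ 2)) / M ≤ M / (2 * (M + p)) := by
    rw [div_le_iff₀ hM]
    calc -(M + p) + √((M + p) ^ 2 + M ^ 2) ≤ M ^ 2 / (2 * (M + p)) := by
          linarith [sqrt_sq_add_sq_sub_le hMp M]
      _ = M / (2 * (M + p)) * M := by ring
  calc (p + 2) * coeffBound p M * (1 + M)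
      = p * ((-(M + p) + √((M + p) ^ 2 + M ^ 2)) / M) * (1 + M) := by
        unfold coeffBound
        field_simp
    _ ≤ p * (M / (2 * (M + p))) * (1 + M) := by gcongr
    _ ≤ M * (p + 1) := by
        rw [mul_div_assoc', div_mul_eq_mul_div, div_le_iff₀ (by positivity)]
        nlinarith [mul_nonneg hp hM.le, mul_nonneg (mul_nonneg hp hM.le) hp]

theorem stmt_15_general (p : ℕ) (hp : 0 < p) (M : ℝ) (hM : (p:ℝ) ≤ M)
    (a : ℂ)
    (habs : ‖a‖ ≤ ((p:ℝ) / ((p:ℝ) + 2))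
      * ((-(M + (p:ℝ)) + Real.sqrt ((M + (p:ℝ)) ^ 2 + M ^ 2)) / M)) :
    ∀ z ∈ ball (0:ℂ) 1,
      ‖a * ((p:ℂ) + 2) * z / ((p:ℂ) + 1 + a * ((p:ℂ) + 2) * z)‖ < M := by
  intro z hz
  rw [mem_ball_zero_iff] at hz
  have hM0 : 0 < M := lt_of_lt_of_le (by exact_mod_cast hp) hM
  have hp1 : ‖(p : ℂ) + 1‖ = p + 1 := by exact_mod_cast Complex.norm_natCast (p + 1)
  have hp2 : ‖(p : ℂ) + 2‖ = p + 2 := by exact_mod_cast Complex.norm_natCast (p + 2)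
  refine norm_div_add_lt hM0 ?_
  calc ‖a * ((p : ℂ) + 2) * z‖ * (1 + M) = (p + 2) * ‖a‖ * (1 + M) * ‖z‖ := by
        rw [norm_mul, norm_mul, hp2]
        ring
    _ ≤ (p + 2) * coeffBound p M * (1 + M) * ‖z‖ := by gcongr; exact habs
    _ ≤ M * (p + 1) * ‖z‖ := by
        gcongr ?_ * _
        exact add_two_mul_coeffBound_mul_le (Nat.cast_nonneg p) hM0
    _ < M * ‖(p : ℂ) + 1‖ := by
        rw [hp1]
        exact mul_lt_of_lt_one_right (by positivity) hz

theorem stmt_15 (p : ℕ) (hp : 0 < p) (M : ℝ) (hM : (p:ℝ) ≤ M)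
    (a : ℂ) (ha : a ≠ 0)
    (habs : ‖a‖ ≤ ((p:ℝ) / ((p:ℝ) + 2))
      * ((-(M + (p:ℝ)) + Real.sqrt ((M + (p:ℝ)) ^ 2 + M ^ 2)) / M)) :
    ∀ z ∈ ball (0:ℂ) 1,
      ‖a * ((p:ℂ) + 2) * z / ((p:ℂ) + 1 + a * ((p:ℂ) + 2) * z)‖ < M :=
  stmt_15_general p hp M hM a habs
end

section
/- Let p be a positive integer and a a nonzero complex number with |a| ≤ p/(p+2) and x := |a|(p+2)/p < 1. Let φ(z) = a(p+2)z/(p+1 + a(p+2)z). Then for all z in the open unit disk, −2x/(1−x²) < Re[ zφ'(z)/(p + φ(z)) ] < 2x/(1−x²). -/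
/-!
With `H ζ = ζ / (1 + ζ)` and `w = a (p + 2) z`, a direct computation gives
`z φ'(z) / (p + φ(z)) = H (w / p) - H (w / (p + 1))`, and both arguments have norm `< x`.
The Möbius map `H` sends the disc `‖ζ‖ < x` onto a disc whose real parts range over
`(-x/(1-x), x/(1+x))`; subtracting two such values gives the bound `2x/(1-x²)`.
-/

open Metric Complex Set

namespace Complex

lemma ofReal_add_ne_zero_of_norm_lt {c : ℝ} {w : ℂ} (h : ‖w‖ < c) : (c : ℂ) + w ≠ 0 := by
  intro h0
  rw [eq_neg_of_add_eq_zero_right h0, norm_neg, norm_real, Real.norm_eq_abs] at h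
  exact (le_abs_self c).not_gt h

/-- Squaring `‖u‖ < r ‖1 - u‖` gives `(1 - r²) s² + 2 r² s - r² < 0` for `s = u.re`, and the
roots of this quadratic are `-r/(1-r)` and `r/(1+r)`. -/
lemma re_mem_Ioo_of_norm_lt_mul_norm_one_sub {u : ℂ} {r : ℝ} (hu : ‖u‖ < r * ‖1 - u‖)
    (hr : r < 1) : u.re ∈ Ioo (-r / (1 - r)) (r / (1 + r)) := by
  have hr0 : 0 < r := pos_of_mul_pos_left ((norm_nonneg u).trans_lt hu) (norm_nonneg _)
  have hsq : u.re ^ 2 + u.im ^ 2 < r ^ 2 * ((1 - u.re) ^ 2 + u.im ^ 2) := by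
    have := pow_lt_pow_left₀ hu (norm_nonneg u) two_ne_zero
    rw [mul_pow, Complex.sq_norm, Complex.sq_norm, normSq_apply, normSq_apply] at this
    simpa [sq] using this
  have hprod : ((1 + r) * u.re - r) * ((1 - r) * u.re + r) < 0 := by
    nlinarith [mul_nonneg (sub_pos.2 hr).le (sq_nonneg u.im), mul_nonneg hr0.le (sq_nonneg u.im)]
  obtain ⟨hupper, hlower⟩ : (1 + r) * u.re - r < 0 ∧ 0 < (1 - r) * u.re + r := by
    rcases mul_neg_iff.1 hprod with ⟨h₁, h₂⟩ | h
    · nlinarith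
    · exact h
  constructor
  · rw [neg_div, neg_lt, lt_div_iff₀ (by linarith)]
    linarith
  · rw [lt_div_iff₀ (by linarith)]
    linarith

lemma re_div_one_add_mem_Ioo {ζ : ℂ} {r : ℝ} (hζ : ‖ζ‖ < r) (hr : r < 1) :
    (ζ / (1 + ζ)).re ∈ Ioo (-r / (1 - r)) (r / (1 + r)) := by
  have hζ1 : 1 + ζ ≠ 0 := by
    simpa using ofReal_add_ne_zero_of_norm_lt (c := 1) (hζ.trans hr)
  have h1u : 1 - ζ / (1 + ζ) = 1 / (1 + ζ) := by field_simp; ring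
  apply re_mem_Ioo_of_norm_lt_mul_norm_one_sub _ hr
  rw [h1u, norm_div, norm_div, norm_one, ← mul_div_assoc, mul_one]
  exact div_lt_div_of_pos_right hζ (norm_pos_iff.2 hζ1)

lemma hasDerivAt_mul_div_add_mul {A b z : ℂ} (h : b + A * z ≠ 0) :
    HasDerivAt (fun t => A * t / (b + A * t)) (A * b / (b + A * z) ^ 2) z := by
  have hnum : HasDerivAt (fun t => A * t) A z := by
    simpa using (hasDerivAt_id z).const_mul A
  rw [show A * b / (b + A * z) ^ 2 = (A * (b + A * z) - A * z * A) / (b + A * z) ^ 2 by ring]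
  exact hnum.div (hnum.const_add b) h

lemma mul_deriv_div_add_eq_sub {A c z : ℂ} (hc : c ≠ 0) (hc₁ : c + 1 ≠ 0)
    (hcz : c + A * z ≠ 0) (hcz₁ : c + 1 + A * z ≠ 0) :
    z * deriv (fun t => A * t / (c + 1 + A * t)) z / (c + A * z / (c + 1 + A * z)) =
      A * z / c / (1 + A * z / c) - A * z / (c + 1) / (1 + A * z / (c + 1)) := by
  have hden : c + A * z / (c + 1 + A * z) = (c + 1) * (c + A * z) / (c + 1 + A * z) := by
    field_simp
    ring
  rw [(hasDerivAt_mul_div_add_mul hcz₁).deriv, hden, one_add_div hc, one_add_div hc₁]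
  rw [mul_comm A z] at hcz hcz₁ ⊢
  field_simp
  ring

lemma norm_div_ofReal_lt {w : ℂ} {c r : ℝ} (hc : 0 < c) (hw : ‖w‖ < r * c) :
    ‖w / c‖ < r := by
  rwa [norm_div, norm_real, Real.norm_of_nonneg hc.le, div_lt_iff₀ hc]

theorem re_mul_deriv_div_add_mem_Ioo {c r : ℝ} (hc : 0 < c) (hr : r < 1) {A z : ℂ}
    (hA : A ≠ 0) (hAr : ‖A‖ = r * c) (hz : ‖z‖ < 1) :
    (z * deriv (fun t => A * t / (c + 1 + A * t)) z / (c + A * z / (c + 1 + A * z))).re ∈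
      Ioo (-(2 * r) / (1 - r ^ 2)) (2 * r / (1 - r ^ 2)) := by
  have hr0 : 0 < r := pos_of_mul_pos_left (hAr ▸ norm_pos_iff.2 hA) hc.le
  have hAz : ‖A * z‖ < r * c := by
    rw [norm_mul, hAr]
    exact mul_lt_of_lt_one_right (by positivity) hz
  have hAz₁ : ‖A * z‖ < r * (c + 1) := by linarith
  have h₁ := re_div_one_add_mem_Ioo (norm_div_ofReal_lt hc hAz) hr
  have h₂ := re_div_one_add_mem_Ioo (norm_div_ofReal_lt (by linarith) hAz₁) hr
  have hcz : (c : ℂ) + A * z ≠ 0 := ofReal_add_ne_zero_of_norm_lt (by nlinarith)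
  have hcz₁ : ((c + 1 : ℝ) : ℂ) + A * z ≠ 0 := ofReal_add_ne_zero_of_norm_lt (by nlinarith)
  have hc₁ : ((c + 1 : ℝ) : ℂ) ≠ 0 := ofReal_ne_zero.2 (by linarith)
  push_cast at h₂ hc₁ hcz₁
  rw [mul_deriv_div_add_eq_sub (ofReal_ne_zero.2 hc.ne') hc₁ hcz hcz₁, sub_re]
  have hr₁ : 1 + r ≠ 0 := by linarith
  have hr₂ : 1 - r ≠ 0 := by linarith
  have hr₃ : 1 - r ^ 2 ≠ 0 := by nlinarith
  have hlo : -(2 * r) / (1 - r ^ 2) = -r / (1 - r) - r / (1 + r) := by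
    field_simp
    ring
  have hhi : 2 * r / (1 - r ^ 2) = r / (1 + r) - -r / (1 - r) := by
    field_simp
    ring
  rw [hlo, hhi]
  exact ⟨by linarith [h₁.1, h₂.2], by linarith [h₁.2, h₂.1]⟩

end Complex

theorem stmt_18_general (p : ℕ) (hp : 0 < p) (a : ℂ) (ha : a ≠ 0)
    (x : ℝ) (hx : x = ‖a‖ * ((p:ℝ) + 2) / (p:ℝ)) (hx1 : x < 1)
    (φ : ℂ → ℂ)
    (hφ : ∀ z, φ z = a * ((p:ℂ) + 2) * z / ((p:ℂ) + 1 + a * ((p:ℂ) + 2) * z)) :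
    ∀ z ∈ ball (0:ℂ) 1,
      -(2 * x) / (1 - x ^ 2) < (z * deriv φ z / ((p:ℂ) + φ z)).re ∧
      (z * deriv φ z / ((p:ℂ) + φ z)).re < 2 * x / (1 - x ^ 2) := by
  intro z hz
  have hp' : (0 : ℝ) < p := by exact_mod_cast hp
  have hnorm : ‖a * ((p : ℂ) + 2)‖ = x * p := by
    rw [hx, norm_mul, div_mul_cancel₀ _ hp'.ne', ← Nat.cast_ofNat, ← Nat.cast_add, norm_natCast]
    push_cast
    ring
  have h := Complex.re_mul_deriv_div_add_mem_Ioo hp' hx1 (mul_ne_zero ha (by norm_cast))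
    hnorm (mem_ball_zero_iff.1 hz)
  rw [funext hφ]
  simpa using h

theorem stmt_18 (p : ℕ) (hp : 0 < p) (a : ℂ) (ha : a ≠ 0)
    (habs : ‖a‖ ≤ (p:ℝ) / ((p:ℝ) + 2))
    (x : ℝ) (hx : x = ‖a‖ * ((p:ℝ) + 2) / (p:ℝ)) (hx1 : x < 1)
    (φ : ℂ → ℂ)
    (hφ : ∀ z, φ z = a * ((p:ℂ) + 2) * z / ((p:ℂ) + 1 + a * ((p:ℂ) + 2) * z)) :
    ∀ z ∈ ball (0:ℂ) 1,
      -(2 * x) / (1 - x ^ 2) < (z * deriv φ z / ((p:ℂ) + φ z)).re ∧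
      (z * deriv φ z / ((p:ℂ) + φ z)).re < 2 * x / (1 - x ^ 2) :=
  stmt_18_general p hp a ha x hx hx1 φ hφ
end
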